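/- arXiv:2307.10082 — 10 statements merged into one kernel-verified Lean document; each statement's English description precedes it below -/
import Mathlib

section
/- Let 1 ≤ i ≤ j ≤ n be indices such that Θ(τq, τd[i:j]) = min over all 1 ≤ s ≤ t ≤ n of Θ(τq, τd[s:t]). Then Θ(τq, τd[i:j]) equals the minimum, over matching sequences a with all values in {i,…,j}, of Σ_{k=1}^{m} Cost(k,a); in particular, the optimal subtrajectory incurs no prefix or suffix insertion cost. -/
/-- `a` is a matching sequence on indices `1..m` with values in `[lo, hi]`:
it is monotone nondecreasing on `{1,…,m}` and `lo ≤ a i ≤ hi` there. -/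
def IsMatchingOn (m lo hi : ℕ) (a : ℕ → ℕ) : Prop :=
  (∀ i, 1 ≤ i → i ≤ m → lo ≤ a i ∧ a i ≤ hi) ∧
  ∀ i j, 1 ≤ i → i ≤ j → j ≤ m → a i ≤ a j

/-- Conversion cost `Cost(i, a)` of the `i`-th query point under a matching sequence `a`. -/
noncomputable def convCost (CostDel CostSub : ℕ → ℕ → ℝ) (CostIns : ℕ → ℕ → ℕ → ℝ)
    (a : ℕ → ℕ) (i : ℕ) : ℝ :=
  if i = 1 then CostSub 1 (a 1)
  else if a (i - 1) = a i then CostDel i (a i)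
  else if a (i - 1) = a i - 1 then CostSub i (a i)
  else CostIns i (a (i - 1)) (a i)

/-- Total conversion cost `Σ_{k=1}^{m} Cost(k, a)`. -/
noncomputable def totalCost (CostDel CostSub : ℕ → ℕ → ℝ) (CostIns : ℕ → ℕ → ℕ → ℝ)
    (m : ℕ) (a : ℕ → ℕ) : ℝ :=
  ∑ k ∈ Finset.Icc 1 m, convCost CostDel CostSub CostIns a k

/-- The general distance `Θ(τq, τd[i:j])`: the minimum over matching sequences `a`
with all values in `{i,…,j}` of
`Insert(i..a(1)−1) + Σ_{k=1}^{m} Cost(k,a) + Insert(a(m)+1..j)`. -/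
noncomputable def Theta (Ins : ℕ → ℕ → ℝ) (CostDel CostSub : ℕ → ℕ → ℝ)
    (CostIns : ℕ → ℕ → ℕ → ℝ) (m i j : ℕ) : ℝ :=
  sInf {v : ℝ | ∃ a : ℕ → ℕ, IsMatchingOn m i j a ∧
    v = Ins i (a 1 - 1) + totalCost CostDel CostSub CostIns m a + Ins (a m + 1) j}

lemma convCost_nonneg (CostDel CostSub : ℕ → ℕ → ℝ) (CostIns : ℕ → ℕ → ℕ → ℝ)
    (hDel : ∀ i j, 0 ≤ CostDel i j) (hSub : ∀ i j, 0 ≤ CostSub i j)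
    (hIns : ∀ i k j, 0 ≤ CostIns i k j) (a : ℕ → ℕ) (k : ℕ) :
    0 ≤ convCost CostDel CostSub CostIns a k := by
  unfold convCost
  split_ifs <;> first | exact hSub _ _ | exact hDel _ _ | exact hIns _ _ _

lemma totalCost_nonneg (CostDel CostSub : ℕ → ℕ → ℝ) (CostIns : ℕ → ℕ → ℕ → ℝ)
    (hDel : ∀ i j, 0 ≤ CostDel i j) (hSub : ∀ i j, 0 ≤ CostSub i j)
    (hIns : ∀ i k j, 0 ≤ CostIns i k j) (m : ℕ) (a : ℕ → ℕ) :
    0 ≤ totalCost CostDel CostSub CostIns m a := by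
  exact Finset.sum_nonneg fun k _ => convCost_nonneg _ _ _ hDel hSub hIns a k


/-- If `τd[i:j]` is an optimal subtrajectory (its `Θ`-distance is minimal
among all `Θ(τq, τd[s:t])` with `1 ≤ s ≤ t ≤ n`), then `Θ(τq, τd[i:j])` equals the minimum,
over matching sequences `a` with all values in `{i,…,j}`, of `Σ_{k=1}^{m} Cost(k,a)`; in particular the optimal subtrajectory incurs no prefix or suffix insertion cost. -/
theorem optimal_subtrajectory_no_insert_cost
    (m n : ℕ) (hm : 1 ≤ m) (hn : 1 ≤ n)
    (CostDel CostSub : ℕ → ℕ → ℝ) (CostIns : ℕ → ℕ → ℕ → ℝ) (Ins : ℕ → ℕ → ℝ)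
    (hDel : ∀ i j, 0 ≤ CostDel i j) (hSub : ∀ i j, 0 ≤ CostSub i j)
    (hIns : ∀ i k j, 0 ≤ CostIns i k j) (hInsNN : ∀ x y, 0 ≤ Ins x y)
    (hInsEmpty : ∀ x y, y < x → Ins x y = 0)
    (i j : ℕ) (hi : 1 ≤ i) (hij : i ≤ j) (hj : j ≤ n)
    (hopt : ∀ s t, 1 ≤ s → s ≤ t → t ≤ n →
      Theta Ins CostDel CostSub CostIns m i j ≤ Theta Ins CostDel CostSub CostIns m s t) :
    Theta Ins CostDel CostSub CostIns m i j =
      sInf {v : ℝ | ∃ a : ℕ → ℕ, IsMatchingOn m i j a ∧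
        v = totalCost CostDel CostSub CostIns m a} := by
  have hTnn : ∀ a : ℕ → ℕ, 0 ≤ totalCost CostDel CostSub CostIns m a :=
    fun a => totalCost_nonneg _ _ _ hDel hSub hIns m a
  set S1 := {v : ℝ | ∃ a : ℕ → ℕ, IsMatchingOn m i j a ∧
    v = Ins i (a 1 - 1) + totalCost CostDel CostSub CostIns m a + Ins (a m + 1) j}
  set S2 := {v : ℝ | ∃ a : ℕ → ℕ, IsMatchingOn m i j a ∧
    v = totalCost CostDel CostSub CostIns m a}
  have hconst : IsMatchingOn m i j (fun _ => i) :=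
    ⟨fun _ _ _ => ⟨le_refl i, hij⟩, fun _ _ _ _ _ => le_refl i⟩
  have hS2ne : S2.Nonempty := ⟨_, (fun _ => i), hconst, rfl⟩
  have hS1ne : S1.Nonempty := ⟨_, (fun _ => i), hconst, rfl⟩
  have hS2bdd : BddBelow S2 := ⟨0, fun v ⟨a, _, hv⟩ => hv ▸ hTnn a⟩
  have hS1bdd : BddBelow S1 := ⟨0, fun v ⟨a, _, hv⟩ => by
    rw [hv]
    have := hTnn a
    have := hInsNN i (a 1 - 1)
    have := hInsNN (a m + 1) j
    linarith⟩
  apply le_antisymm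
  · -- Theta i j ≤ sInf S2
    apply le_csInf hS2ne
    rintro v ⟨a, ha, rfl⟩
    have ha1 := (ha.1 1 le_rfl hm)
    have ham := (ha.1 m hm le_rfl)
    have h1m : a 1 ≤ a m := ha.2 1 m le_rfl hm le_rfl
    have hma : IsMatchingOn m (a 1) (a m) a :=
      ⟨fun k h1 h2 => ⟨ha.2 1 k le_rfl h1 h2, ha.2 k m h1 h2 le_rfl⟩, ha.2⟩
    have hmem : totalCost CostDel CostSub CostIns m a ∈
        {v : ℝ | ∃ b : ℕ → ℕ, IsMatchingOn m (a 1) (a m) b ∧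
          v = Ins (a 1) (b 1 - 1) + totalCost CostDel CostSub CostIns m b +
            Ins (b m + 1) (a m)} := by
      refine ⟨a, hma, ?_⟩
      rw [hInsEmpty (a 1) (a 1 - 1) (by omega), hInsEmpty (a m + 1) (a m) (by omega)]
      ring
    have hbdd : BddBelow {v : ℝ | ∃ b : ℕ → ℕ, IsMatchingOn m (a 1) (a m) b ∧
        v = Ins (a 1) (b 1 - 1) + totalCost CostDel CostSub CostIns m b +
          Ins (b m + 1) (a m)} := ⟨0, fun v ⟨b, _, hv⟩ => by
      rw [hv]
      have := hTnn b
      have := hInsNN (a 1) (b 1 - 1)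
      have := hInsNN (b m + 1) (a m)
      linarith⟩
    calc Theta Ins CostDel CostSub CostIns m i j
        ≤ Theta Ins CostDel CostSub CostIns m (a 1) (a m) :=
          hopt (a 1) (a m) (le_trans hi ha1.1) h1m (le_trans ham.2 hj)
      _ ≤ totalCost CostDel CostSub CostIns m a := csInf_le hbdd hmem
  · -- sInf S2 ≤ Theta i j
    apply le_csInf hS1ne
    rintro v ⟨a, ha, rfl⟩
    have : totalCost CostDel CostSub CostIns m a ∈ S2 := ⟨a, ha, rfl⟩
    have h2 := csInf_le hS2bdd this
    have := hInsNN i (a 1 - 1)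
    have := hInsNN (a m + 1) j
    linarith
end

section
/- Let 1 ≤ i ≤ j ≤ n be such that Θ(τq,τd[i:j]) = min over all 1 ≤ s ≤ t ≤ n of Θ(τq,τd[s:t]), and let a° be a matching sequence with all values in {i,…,j} such that Σ_{k=1}^{m} Cost(k,a°) = Θ(τq,τd[i:j]). Then a° attains the minimum of Σ_{k=1}^{m} Cost(k,a) over all matching sequences a : {1,…,m} → {1,…,n}. -/
/-- If `τd[i:j]` is an optimal subtrajectory and `a°` is a matching sequence
with values in `{i,…,j}` whose total conversion cost equals `Θ(τq, τd[i:j])`, then `a°`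
attains the minimum of `Σ_{k=1}^{m} Cost(k,a)` over all matching sequences
`a : {1,…,m} → {1,…,n}`. -/
theorem optimal_matching_sequence_globally_optimal
    (m n : ℕ) (hm : 1 ≤ m) (hn : 1 ≤ n)
    (CostDel CostSub : ℕ → ℕ → ℝ) (CostIns : ℕ → ℕ → ℕ → ℝ) (Ins : ℕ → ℕ → ℝ)
    (hDel : ∀ i j, 0 ≤ CostDel i j) (hSub : ∀ i j, 0 ≤ CostSub i j)
    (hIns : ∀ i k j, 0 ≤ CostIns i k j) (hInsNN : ∀ x y, 0 ≤ Ins x y)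
    (hInsEmpty : ∀ x y, y < x → Ins x y = 0)
    (i j : ℕ) (hi : 1 ≤ i) (hij : i ≤ j) (hj : j ≤ n)
    (hopt : ∀ s t, 1 ≤ s → s ≤ t → t ≤ n →
      Theta Ins CostDel CostSub CostIns m i j ≤ Theta Ins CostDel CostSub CostIns m s t)
    (a₀ : ℕ → ℕ) (ha₀ : IsMatchingOn m i j a₀)
    (ha₀cost : totalCost CostDel CostSub CostIns m a₀ =
      Theta Ins CostDel CostSub CostIns m i j) :
    ∀ a : ℕ → ℕ, IsMatchingOn m 1 n a →
      totalCost CostDel CostSub CostIns m a₀ ≤ totalCost CostDel CostSub CostIns m a := by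
  intro a ha
  have hconv : ∀ (b : ℕ → ℕ) k, 0 ≤ convCost CostDel CostSub CostIns b k := by
    intro b k
    unfold convCost
    split_ifs <;> [exact hSub _ _; exact hDel _ _; exact hSub _ _; exact hIns _ _ _]
  have htc : ∀ b : ℕ → ℕ, 0 ≤ totalCost CostDel CostSub CostIns m b := by
    intro b
    exact Finset.sum_nonneg fun k _ => hconv b k
  have hbdd : ∀ s t : ℕ, BddBelow {v : ℝ | ∃ b : ℕ → ℕ, IsMatchingOn m s t b ∧
      v = Ins s (b 1 - 1) + totalCost CostDel CostSub CostIns m b + Ins (b m + 1) t} := by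
    intro s t
    refine ⟨0, ?_⟩
    rintro v ⟨b, _, rfl⟩
    have := htc b
    have := hInsNN s (b 1 - 1)
    have := hInsNN (b m + 1) t
    linarith
  set s := a 1 with hs
  set t := a m with ht
  have h1 : 1 ≤ s ∧ s ≤ n := ha.1 1 le_rfl hm
  have h2 : 1 ≤ t ∧ t ≤ n := ha.1 m hm le_rfl
  have hst : s ≤ t := ha.2 1 m le_rfl hm le_rfl
  have hmem : IsMatchingOn m s t a := by
    refine ⟨fun k h1k hkm => ⟨ha.2 1 k le_rfl h1k hkm, ha.2 k m h1k hkm le_rfl⟩, ha.2⟩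
  have hTst : Theta Ins CostDel CostSub CostIns m s t ≤
      totalCost CostDel CostSub CostIns m a := by
    have hmem' : totalCost CostDel CostSub CostIns m a ∈
        {v : ℝ | ∃ b : ℕ → ℕ, IsMatchingOn m s t b ∧
          v = Ins s (b 1 - 1) + totalCost CostDel CostSub CostIns m b + Ins (b m + 1) t} := by
      refine ⟨a, hmem, ?_⟩
      have e1 : Ins s (a 1 - 1) = 0 := hInsEmpty _ _ (by omega)
      have e2 : Ins (a m + 1) t = 0 := hInsEmpty _ _ (by omega)
      rw [e1, e2]; ring
    exact csInf_le (hbdd s t) hmem'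
  calc totalCost CostDel CostSub CostIns m a₀
      = Theta Ins CostDel CostSub CostIns m i j := ha₀cost
    _ ≤ Theta Ins CostDel CostSub CostIns m s t := hopt s t h1.1 hst h2.2
    _ ≤ totalCost CostDel CostSub CostIns m a := hTst
end

section
/- For all 1 ≤ j ≤ n, C(1,j) = CostSub(1,j); and for all 1 < i ≤ m and 1 < j ≤ n, C(i,j) = min{ C(i−1,j) + CostDel(i,j), C(i−1,j−1) + CostSub(i,j), min over 1 ≤ k < j−1 of ( C(i−1,k) + CostIns(i,k,j) ) }, where the innermost minimum is omitted when j = 2. -/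
/-- The optimal partial matching-conversion cost `C(i,j)`: the minimum over
monotone nondecreasing `a : {1,…,i} → {1,…,n}` with `a i = j` of `Σ_{k=1}^{i} Cost(k,a)`. -/
noncomputable def Cpm (CostDel CostSub : ℕ → ℕ → ℝ) (CostIns : ℕ → ℕ → ℕ → ℝ)
    (n i j : ℕ) : ℝ :=
  sInf {v : ℝ | ∃ a : ℕ → ℕ, IsMatchingOn i 1 n a ∧ a i = j ∧
    v = totalCost CostDel CostSub CostIns i a}

section Aux

variable (CostDel CostSub : ℕ → ℕ → ℝ) (CostIns : ℕ → ℕ → ℕ → ℝ)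

def Sset (n i j : ℕ) : Set ℝ :=
  {v : ℝ | ∃ a : ℕ → ℕ, IsMatchingOn i 1 n a ∧ a i = j ∧
    v = totalCost CostDel CostSub CostIns i a}

lemma Cpm_eq_sInf (n i j : ℕ) :
    Cpm CostDel CostSub CostIns n i j = sInf (Sset CostDel CostSub CostIns n i j) := rfl

lemma convCost_congr (a b : ℕ → ℕ) (k i : ℕ) (hk1 : 1 ≤ k) (hki : k ≤ i)
    (hab : ∀ t, 1 ≤ t → t ≤ i → a t = b t) :
    convCost CostDel CostSub CostIns a k = convCost CostDel CostSub CostIns b k := by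
  unfold convCost
  rcases eq_or_ne k 1 with h | h
  · subst h; simp [hab 1 le_rfl hki]
  · rw [if_neg h, if_neg h, hab (k-1) (by omega) (by omega), hab k hk1 hki]

lemma totalCost_congr (i : ℕ) (a b : ℕ → ℕ)
    (hab : ∀ t, 1 ≤ t → t ≤ i → a t = b t) :
    totalCost CostDel CostSub CostIns i a = totalCost CostDel CostSub CostIns i b := by
  unfold totalCost
  refine Finset.sum_congr rfl fun k hk => ?_
  simp only [Finset.mem_Icc] at hk
  exact convCost_congr _ _ _ a b k i hk.1 hk.2 hab

lemma Sset_finite (n i j : ℕ) : (Sset CostDel CostSub CostIns n i j).Finite := by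
  have hsub : Sset CostDel CostSub CostIns n i j ⊆
      (fun g : Fin (i+1) → Fin (n+1) =>
        totalCost CostDel CostSub CostIns i
          (fun k => if h : k < i + 1 then (g ⟨k, h⟩ : ℕ) else 0)) '' Set.univ := by
    rintro v ⟨a, ha, hai, rfl⟩
    refine ⟨fun t => ⟨min (a t) n, by omega⟩, Set.mem_univ _, ?_⟩
    refine totalCost_congr _ _ _ i _ a fun t ht1 hti => ?_
    have hb := ha.1 t ht1 hti
    simp only [dif_pos (by omega : t < i + 1)]
    omega
  exact Set.Finite.subset (Set.finite_univ.image _) hsub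

lemma Sset_nonempty (n i j : ℕ) (hj1 : 1 ≤ j) (hjn : j ≤ n) :
    (Sset CostDel CostSub CostIns n i j).Nonempty :=
  ⟨_, fun _ => j, ⟨fun _ _ _ => ⟨hj1, hjn⟩, fun _ _ _ _ _ => le_rfl⟩, rfl, rfl⟩

lemma Cpm_le (n i j : ℕ) {v : ℝ} (hv : v ∈ Sset CostDel CostSub CostIns n i j) :
    Cpm CostDel CostSub CostIns n i j ≤ v :=
  csInf_le (Sset_finite CostDel CostSub CostIns n i j).bddBelow hv

lemma Cpm_mem (n i j : ℕ) (hj1 : 1 ≤ j) (hjn : j ≤ n) :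
    Cpm CostDel CostSub CostIns n i j ∈ Sset CostDel CostSub CostIns n i j :=
  (Sset_nonempty CostDel CostSub CostIns n i j hj1 hjn).csInf_mem
    (Sset_finite CostDel CostSub CostIns n i j)

lemma totalCost_succ (k : ℕ) (hk : 1 ≤ k) (a : ℕ → ℕ) :
    totalCost CostDel CostSub CostIns (k+1) a =
      totalCost CostDel CostSub CostIns k a + convCost CostDel CostSub CostIns a (k+1) := by
  unfold totalCost
  rw [Finset.sum_Icc_succ_top (by omega : 1 ≤ k + 1)]

lemma totalCost_split (i : ℕ) (hi : 2 ≤ i) (a : ℕ → ℕ) :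
    totalCost CostDel CostSub CostIns i a =
      totalCost CostDel CostSub CostIns (i-1) a + convCost CostDel CostSub CostIns a i := by
  obtain ⟨k, rfl⟩ : ∃ k, i = k + 1 := ⟨i-1, by omega⟩
  simp only [Nat.add_sub_cancel]
  exact totalCost_succ CostDel CostSub CostIns k (by omega) a

/-- upper bound: extend an optimal matching on `i-1` ending at `k` by `j`. -/
lemma Cpm_le_add (n i j k : ℕ) (hi : 2 ≤ i) (hk1 : 1 ≤ k) (hkj : k ≤ j)
    (hj1 : 1 ≤ j) (hjn : j ≤ n) (hkn : k ≤ n) :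
    Cpm CostDel CostSub CostIns n i j ≤ Cpm CostDel CostSub CostIns n (i-1) k +
      (if k = j then CostDel i j else if k = j - 1 then CostSub i j else CostIns i k j) := by
  obtain ⟨a, ha, hai, hval⟩ := Cpm_mem CostDel CostSub CostIns n (i-1) k hk1 hkn
  set a' : ℕ → ℕ := fun t => if t ≤ i - 1 then a t else j with ha'
  have hagree : ∀ t, 1 ≤ t → t ≤ i - 1 → a' t = a t := fun t _ ht => if_pos ht
  have ha'i1 : a' (i-1) = k := by rw [hagree (i-1) (by omega) le_rfl, hai]
  have ha'i : a' i = j := if_neg (by omega)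
  have hmatch : IsMatchingOn i 1 n a' := by
    constructor
    · intro t ht1 hti
      by_cases h : t ≤ i - 1
      · rw [hagree t ht1 h]; exact ha.1 t ht1 h
      · rw [show a' t = j from if_neg h]; exact ⟨hj1, hjn⟩
    · intro s t hs hst hti
      by_cases h1 : s ≤ i - 1 <;> by_cases h2 : t ≤ i - 1
      · rw [hagree s hs h1, hagree t (by omega) h2]; exact ha.2 s t hs hst h2
      · rw [hagree s hs h1, show a' t = j from if_neg h2]
        calc a s ≤ a (i-1) := ha.2 s (i-1) hs h1 le_rfl
        _ = k := hai
        _ ≤ j := hkj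
      · omega
      · rw [show a' s = j from if_neg h1, show a' t = j from if_neg h2]
  have hmem : totalCost CostDel CostSub CostIns i a' ∈ Sset CostDel CostSub CostIns n i j :=
    ⟨a', hmatch, ha'i, rfl⟩
  refine le_trans (Cpm_le CostDel CostSub CostIns n i j hmem) (le_of_eq ?_)
  rw [totalCost_split CostDel CostSub CostIns i hi]
  congr 1
  · rw [totalCost_congr CostDel CostSub CostIns (i-1) a' a hagree, hval]
  · unfold convCost
    rw [if_neg (by omega : ¬ i = 1), ha'i1, ha'i]

/-- lower bound: decompose a matching on `i` at position `i-1`. -/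
lemma exists_decomp (n i j : ℕ) (hi : 2 ≤ i) {v : ℝ}
    (hv : v ∈ Sset CostDel CostSub CostIns n i j) :
    ∃ k, 1 ≤ k ∧ k ≤ j ∧ k ≤ n ∧
      Cpm CostDel CostSub CostIns n (i-1) k +
        (if k = j then CostDel i j else if k = j - 1 then CostSub i j else CostIns i k j) ≤ v := by
  obtain ⟨a, ha, hai, rfl⟩ := hv
  refine ⟨a (i-1), (ha.1 (i-1) (by omega) (by omega)).1, ?_, (ha.1 (i-1) (by omega) (by omega)).2, ?_⟩
  · rw [← hai]; exact ha.2 (i-1) i (by omega) (by omega) le_rfl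
  · have hmem : totalCost CostDel CostSub CostIns (i-1) a ∈
        Sset CostDel CostSub CostIns n (i-1) (a (i-1)) := by
      refine ⟨a, ⟨fun t ht1 hti => ha.1 t ht1 (by omega),
        fun s t hs hst hti => ha.2 s t hs hst (by omega)⟩, rfl, rfl⟩
    have h1 : Cpm CostDel CostSub CostIns n (i-1) (a (i-1)) ≤
        totalCost CostDel CostSub CostIns (i-1) a :=
      Cpm_le CostDel CostSub CostIns n (i-1) (a (i-1)) hmem
    have hsplit : totalCost CostDel CostSub CostIns i a =
        totalCost CostDel CostSub CostIns (i-1) a + convCost CostDel CostSub CostIns a i :=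
      totalCost_split CostDel CostSub CostIns i hi a
    have hcc : convCost CostDel CostSub CostIns a i =
        (if a (i-1) = j then CostDel i j else if a (i-1) = j - 1 then CostSub i j
          else CostIns i (a (i-1)) j) := by
      unfold convCost
      rw [if_neg (by omega : ¬ i = 1), hai]
    rw [hsplit, hcc]
    exact add_le_add h1 le_rfl

end Aux

/-- For all `1 ≤ j ≤ n`, `C(1,j) = CostSub(1,j)`; and for all `1 < i ≤ m`
and `1 < j ≤ n`,
`C(i,j) = min{ C(i−1,j) + CostDel(i,j), C(i−1,j−1) + CostSub(i,j),
min_{1 ≤ k < j−1} ( C(i−1,k) + CostIns(i,k,j) ) }`,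
where the innermost minimum is omitted when `j = 2`. -/
theorem Cpm_recurrence
    (m n : ℕ) (hm : 1 ≤ m) (hn : 1 ≤ n)
    (CostDel CostSub : ℕ → ℕ → ℝ) (CostIns : ℕ → ℕ → ℕ → ℝ) :
    (∀ j, 1 ≤ j → j ≤ n → Cpm CostDel CostSub CostIns n 1 j = CostSub 1 j) ∧
    (∀ i, 1 < i → i ≤ m → 2 ≤ n →
      Cpm CostDel CostSub CostIns n i 2 =
        min (Cpm CostDel CostSub CostIns n (i - 1) 2 + CostDel i 2)
          (Cpm CostDel CostSub CostIns n (i - 1) 1 + CostSub i 2)) ∧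
    (∀ i j, 1 < i → i ≤ m → 2 < j → j ≤ n →
      Cpm CostDel CostSub CostIns n i j =
        min (min (Cpm CostDel CostSub CostIns n (i - 1) j + CostDel i j)
            (Cpm CostDel CostSub CostIns n (i - 1) (j - 1) + CostSub i j))
          (sInf {v : ℝ | ∃ k : ℕ, 1 ≤ k ∧ k < j - 1 ∧
            v = Cpm CostDel CostSub CostIns n (i - 1) k + CostIns i k j})) := by
  refine ⟨?_, ?_, ?_⟩
  · -- base case
    intro j hj1 hjn
    rw [Cpm_eq_sInf]
    have hset : Sset CostDel CostSub CostIns n 1 j = {CostSub 1 j} := by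
      ext v
      constructor
      · rintro ⟨a, ha, hai, rfl⟩
        have : totalCost CostDel CostSub CostIns 1 a = CostSub 1 (a 1) := by
          unfold totalCost
          rw [show Finset.Icc 1 1 = {1} from rfl, Finset.sum_singleton]
          unfold convCost; rw [if_pos rfl]
        simp [this, hai]
      · rintro rfl
        refine ⟨fun _ => j, ⟨fun _ _ _ => ⟨hj1, hjn⟩, fun _ _ _ _ _ => le_rfl⟩, rfl, ?_⟩
        unfold totalCost
        rw [show Finset.Icc 1 1 = {1} from rfl, Finset.sum_singleton]
        unfold convCost; rw [if_pos rfl]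
    rw [hset, csInf_singleton]
  · -- case j = 2
    intro i hi him hn2
    apply le_antisymm
    · apply le_min
      · have := Cpm_le_add CostDel CostSub CostIns n i 2 2 (by omega) (by omega) le_rfl
          (by omega) hn2 hn2
        simpa using this
      · have := Cpm_le_add CostDel CostSub CostIns n i 2 1 (by omega) le_rfl (by omega)
          (by omega) hn2 (by omega)
        simpa using this
    · rw [Cpm_eq_sInf]
      apply le_csInf (Sset_nonempty CostDel CostSub CostIns n i 2 (by omega) hn2)
      intro v hv
      obtain ⟨k, hk1, hk2, hkn, hle⟩ := exists_decomp CostDel CostSub CostIns n i 2 (by omega) hv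
      interval_cases k
      · rw [if_neg (by omega), if_pos (by omega)] at hle
        exact le_trans (min_le_right _ _) hle
      · rw [if_pos rfl] at hle
        exact le_trans (min_le_left _ _) hle
  · -- case j > 2
    intro i j hi him hj2 hjn
    set T : Set ℝ := {v : ℝ | ∃ k : ℕ, 1 ≤ k ∧ k < j - 1 ∧
        v = Cpm CostDel CostSub CostIns n (i - 1) k + CostIns i k j} with hT
    have hTfin : T.Finite := by
      have : T ⊆ (fun k => Cpm CostDel CostSub CostIns n (i-1) k + CostIns i k j) ''
          (Set.Iio (j-1)) := by
        rintro v ⟨k, hk1, hk2, rfl⟩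
        exact ⟨k, hk2, rfl⟩
      exact Set.Finite.subset ((Set.finite_Iio _).image _) this
    have hTne : T.Nonempty := ⟨_, 1, le_rfl, by omega, rfl⟩
    apply le_antisymm
    · apply le_min
      · apply le_min
        · have := Cpm_le_add CostDel CostSub CostIns n i j j (by omega) (by omega) le_rfl
            (by omega) hjn hjn
          simpa using this
        · have := Cpm_le_add CostDel CostSub CostIns n i j (j-1) (by omega) (by omega)
            (by omega) (by omega) hjn (by omega)
          rw [if_neg (by omega), if_pos rfl] at this
          exact this
      · obtain ⟨k, hk1, hk2, hkval⟩ := hTne.csInf_mem hTfin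
        rw [hkval]
        have := Cpm_le_add CostDel CostSub CostIns n i j k (by omega) hk1 (by omega)
          (by omega) hjn (by omega)
        rw [if_neg (by omega), if_neg (by omega)] at this
        exact this
    · rw [Cpm_eq_sInf]
      apply le_csInf (Sset_nonempty CostDel CostSub CostIns n i j (by omega) hjn)
      intro v hv
      obtain ⟨k, hk1, hk2, hkn, hle⟩ := exists_decomp CostDel CostSub CostIns n i j (by omega) hv
      rcases eq_or_ne k j with rfl | hne
      · rw [if_pos rfl] at hle
        exact le_trans (le_trans (min_le_left _ _) (min_le_left _ _)) hle
      rcases eq_or_ne k (j-1) with rfl | hne2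
      · rw [if_neg hne, if_pos rfl] at hle
        exact le_trans (le_trans (min_le_left _ _) (min_le_right _ _)) hle
      · rw [if_neg hne, if_neg hne2] at hle
        have hmemT : Cpm CostDel CostSub CostIns n (i-1) k + CostIns i k j ∈ T :=
          ⟨k, hk1, by omega, rfl⟩
        exact le_trans (min_le_right _ _) (le_trans (csInf_le hTfin.bddBelow hmemT) hle)
end

section
/- C(1,j) = sub(τq[1],τd[j]) for all 1 ≤ j ≤ n; C(i,1) = C(i−1,1) + sub(τq[i],τd[1]) for all 1 < i ≤ m; and C(i,j) = min{ C(i−1,j), C(i,j−1), C(i−1,j−1) } + sub(τq[i],τd[j]) for all 1 < i ≤ m and 1 < j ≤ n. -/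
/-- The optimal partial matching-conversion cost `C(i,j)` for the DTW conversion costs
`CostDel(i,j) = CostSub(i,j) = sub(τq[i],τd[j])` and
`CostIns(i,k,j) = min_{k ≤ t ≤ j−1} ( Σ_{p=k+1}^{t} sub(τq[i−1],τd[p]) +
Σ_{p=t+1}^{j} sub(τq[i],τd[p]) )`. -/
noncomputable def dtwCpm {P : Type*} (τq τd : ℕ → P) (sub : P → P → ℝ)
    (n : ℕ) : ℕ → ℕ → ℝ :=
  Cpm (fun i j => sub (τq i) (τd j)) (fun i j => sub (τq i) (τd j))
    (fun i k j => sInf {v : ℝ | ∃ t : ℕ, k ≤ t ∧ t ≤ j - 1 ∧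
      v = (∑ p ∈ Finset.Icc (k + 1) t, sub (τq (i - 1)) (τd p)) +
          ∑ p ∈ Finset.Icc (t + 1) j, sub (τq i) (τd p)}) n

namespace DTW

variable {P : Type*} (τq τd : ℕ → P) (sub : P → P → ℝ)

def iSet (i k j : ℕ) : Set ℝ :=
  {v : ℝ | ∃ t : ℕ, k ≤ t ∧ t ≤ j - 1 ∧
    v = (∑ p ∈ Finset.Icc (k + 1) t, sub (τq (i - 1)) (τd p)) +
        ∑ p ∈ Finset.Icc (t + 1) j, sub (τq i) (τd p)}

noncomputable def iCost (i k j : ℕ) : ℝ := sInf (iSet τq τd sub i k j)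

noncomputable def sC : ℕ → ℕ → ℝ := fun i j => sub (τq i) (τd j)

noncomputable def cc (a : ℕ → ℕ) (i : ℕ) : ℝ :=
  convCost (sC τq τd sub) (sC τq τd sub) (iCost τq τd sub) a i

noncomputable def tC (m : ℕ) (a : ℕ → ℕ) : ℝ :=
  totalCost (sC τq τd sub) (sC τq τd sub) (iCost τq τd sub) m a

def mSet (n i j : ℕ) : Set ℝ :=
  {v : ℝ | ∃ a : ℕ → ℕ, IsMatchingOn i 1 n a ∧ a i = j ∧ v = tC τq τd sub i a}

lemma dtw_eq (n i j : ℕ) : dtwCpm τq τd sub n i j = sInf (mSet τq τd sub n i j) := rfl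

lemma tC_def (m : ℕ) (a : ℕ → ℕ) :
    tC τq τd sub m a = ∑ k ∈ Finset.Icc 1 m, cc τq τd sub a k := rfl

lemma cc_one (a : ℕ → ℕ) : cc τq τd sub a 1 = sub (τq 1) (τd (a 1)) := by
  simp [cc, convCost, sC]

lemma cc_del (a : ℕ → ℕ) {i : ℕ} (hi : i ≠ 1) (h : a (i - 1) = a i) :
    cc τq τd sub a i = sub (τq i) (τd (a i)) := by
  simp [cc, convCost, sC, hi, h]

lemma cc_subst (a : ℕ → ℕ) {i : ℕ} (hi : i ≠ 1) (h1 : a (i - 1) ≠ a i)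
    (h2 : a (i - 1) = a i - 1) :
    cc τq τd sub a i = sub (τq i) (τd (a i)) := by
  simp [cc, convCost, sC, hi, h1, h2]

lemma cc_ins (a : ℕ → ℕ) {i : ℕ} (hi : i ≠ 1) (h1 : a (i - 1) ≠ a i)
    (h2 : a (i - 1) ≠ a i - 1) :
    cc τq τd sub a i = iCost τq τd sub i (a (i - 1)) (a i) := by
  simp [cc, convCost, sC, hi, h1, h2]

variable (hsub : ∀ p q, 0 ≤ sub p q)
include hsub

lemma iSet_nonneg : ∀ v ∈ iSet τq τd sub i k j, 0 ≤ v := by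
  rintro v ⟨t, _, _, rfl⟩
  have h1 : (0:ℝ) ≤ ∑ p ∈ Finset.Icc (k + 1) t, sub (τq (i - 1)) (τd p) :=
    Finset.sum_nonneg fun p _ => hsub _ _
  have h2 : (0:ℝ) ≤ ∑ p ∈ Finset.Icc (t + 1) j, sub (τq i) (τd p) :=
    Finset.sum_nonneg fun p _ => hsub _ _
  linarith

lemma iSet_bdd : BddBelow (iSet τq τd sub i k j) :=
  ⟨0, fun v hv => iSet_nonneg τq τd sub hsub v hv⟩

lemma iCost_nonneg : 0 ≤ iCost τq τd sub i k j :=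
  Real.sInf_nonneg (iSet_nonneg τq τd sub hsub)

lemma iCost_le {i k j t : ℕ} (hkt : k ≤ t) (ht : t ≤ j - 1) :
    iCost τq τd sub i k j ≤
      (∑ p ∈ Finset.Icc (k + 1) t, sub (τq (i - 1)) (τd p)) +
        ∑ p ∈ Finset.Icc (t + 1) j, sub (τq i) (τd p) :=
  csInf_le (iSet_bdd τq τd sub hsub) ⟨t, hkt, ht, rfl⟩

omit hsub in
lemma le_iCost {i k j : ℕ} {c : ℝ} (hkj : k ≤ j - 1)
    (H : ∀ t, k ≤ t → t ≤ j - 1 →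
      c ≤ (∑ p ∈ Finset.Icc (k + 1) t, sub (τq (i - 1)) (τd p)) +
          ∑ p ∈ Finset.Icc (t + 1) j, sub (τq i) (τd p)) :
    c ≤ iCost τq τd sub i k j :=
  le_csInf ⟨_, ⟨k, le_refl k, hkj, rfl⟩⟩ (by rintro v ⟨t, h1, h2, rfl⟩; exact H t h1 h2)

lemma cc_nonneg (a : ℕ → ℕ) (i : ℕ) : 0 ≤ cc τq τd sub a i := by
  unfold cc convCost
  split_ifs
  · exact hsub _ _
  · exact hsub _ _
  · exact hsub _ _
  · exact iCost_nonneg τq τd sub hsub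

lemma tC_nonneg (m : ℕ) (a : ℕ → ℕ) : 0 ≤ tC τq τd sub m a := by
  rw [tC_def]
  exact Finset.sum_nonneg fun k _ => cc_nonneg τq τd sub hsub a k

omit hsub

lemma cc_congr {a b : ℕ → ℕ} {m : ℕ} (h : ∀ l, 1 ≤ l → l ≤ m → a l = b l)
    {k : ℕ} (h1 : 1 ≤ k) (h2 : k ≤ m) : cc τq τd sub a k = cc τq τd sub b k := by
  rcases eq_or_ne k 1 with rfl | hk
  · rw [cc_one, cc_one, h 1 le_rfl h2]
  · have e1 : a (k - 1) = b (k - 1) := h _ (by omega) (by omega)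
    have e2 : a k = b k := h _ h1 h2
    simp only [cc, convCost, hk, if_false, e1, e2]

lemma tC_congr {a b : ℕ → ℕ} {m : ℕ} (h : ∀ l, 1 ≤ l → l ≤ m → a l = b l) :
    tC τq τd sub m a = tC τq τd sub m b := by
  rw [tC_def, tC_def]
  refine Finset.sum_congr rfl fun k hk => ?_
  rw [Finset.mem_Icc] at hk
  exact cc_congr τq τd sub h hk.1 hk.2

lemma tC_succ (m : ℕ) (a : ℕ → ℕ) :
    tC τq τd sub (m + 1) a = tC τq τd sub m a + cc τq τd sub a (m + 1) := by
  rw [tC_def, tC_def, Finset.sum_Icc_succ_top (by omega)]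

include hsub

lemma mSet_bdd (n i j : ℕ) : BddBelow (mSet τq τd sub n i j) := by
  refine ⟨0, ?_⟩
  rintro v ⟨a, _, _, rfl⟩
  exact tC_nonneg τq τd sub hsub i a

omit hsub

lemma mSet_nonempty {n i j : ℕ} (hj1 : 1 ≤ j) (hjn : j ≤ n) :
    (mSet τq τd sub n i j).Nonempty := by
  refine ⟨_, fun l => if l < i then 1 else j, ⟨?_, ?_⟩, by simp, rfl⟩
  · intro l _ _
    dsimp only
    split_ifs <;> omega
  · intro p q _ hpq hq
    dsimp only
    split_ifs <;> omega

include hsub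

lemma C_le {n i j : ℕ} {a : ℕ → ℕ} (h : IsMatchingOn i 1 n a) (ha : a i = j) :
    dtwCpm τq τd sub n i j ≤ tC τq τd sub i a :=
  csInf_le (mSet_bdd τq τd sub hsub n i j) ⟨a, h, ha, rfl⟩

omit hsub

lemma le_C {n i j : ℕ} {c : ℝ} (hj1 : 1 ≤ j) (hjn : j ≤ n)
    (H : ∀ a : ℕ → ℕ, IsMatchingOn i 1 n a → a i = j → c ≤ tC τq τd sub i a) :
    c ≤ dtwCpm τq τd sub n i j :=
  le_csInf (mSet_nonempty τq τd sub hj1 hjn)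
    (by rintro v ⟨a, h, ha, rfl⟩; exact H a h ha)


include hsub

/-- one-column step for the insertion cost -/
lemma iCost_step {i k j : ℕ} (hk : k ≤ j - 1) (hj : 1 ≤ j) :
    iCost τq τd sub i k (j + 1) ≤ iCost τq τd sub i k j + sub (τq i) (τd (j + 1)) := by
  rw [← sub_le_iff_le_add]
  refine le_csInf ⟨_, ⟨k, le_refl k, hk, rfl⟩⟩ ?_
  rintro v ⟨t, h1, h2, rfl⟩
  rw [sub_le_iff_le_add]
  have hmem : iCost τq τd sub i k (j + 1) ≤
      (∑ p ∈ Finset.Icc (k + 1) t, sub (τq (i - 1)) (τd p)) +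
        ∑ p ∈ Finset.Icc (t + 1) (j + 1), sub (τq i) (τd p) :=
    iCost_le τq τd sub hsub h1 (by omega)
  rw [Finset.sum_Icc_succ_top (by omega : t + 1 ≤ j + 1)] at hmem
  linarith

/-- B1: `C(i, j+1) ≤ C(i, j) + sub(τq i, τd (j+1))`. -/
lemma C_step {n i j : ℕ} (hi : 1 ≤ i) (hj : 1 ≤ j) (hjn : j + 1 ≤ n) :
    dtwCpm τq τd sub n i (j + 1) ≤ dtwCpm τq τd sub n i j + sub (τq i) (τd (j + 1)) := by
  rw [← sub_le_iff_le_add, dtw_eq τq τd sub n i j]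
  refine le_csInf (mSet_nonempty τq τd sub hj (by omega)) ?_
  rintro v ⟨a, ha, haj, rfl⟩
  rw [sub_le_iff_le_add]
  obtain ⟨m, rfl⟩ : ∃ m, i = m + 1 := ⟨i - 1, by omega⟩
  set a' : ℕ → ℕ := fun l => if l < m + 1 then a l else j + 1 with ha'
  have ha'm : IsMatchingOn (m + 1) 1 n a' := by
    constructor
    · intro l hl1 hl2
      simp only [ha']
      split_ifs with h
      · exact ha.1 l hl1 (by omega)
      · omega
    · intro p q hp hpq hq
      simp only [ha']
      split_ifs with h1 h2
      · exact ha.2 p q hp hpq (by omega)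
      · have := ha.2 p (m + 1) hp (by omega) le_rfl
        omega
      · omega
      · omega
  have ha'i : a' (m + 1) = j + 1 := by simp [ha']
  have key : tC τq τd sub (m + 1) a' ≤ tC τq τd sub (m + 1) a + sub (τq (m+1)) (τd (j+1)) := by
    rw [tC_succ, tC_succ, tC_congr τq τd sub (a := a') (b := a) (m := m)
      (fun l hl1 hl2 => by simp [ha', Nat.lt_succ_of_le hl2]; omega)]
    have hcc : cc τq τd sub a' (m + 1) ≤ cc τq τd sub a (m + 1) + sub (τq (m+1)) (τd (j+1)) := by
      rcases Nat.eq_zero_or_pos m with rfl | hm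
      · rw [cc_one, cc_one]
        have : a' 1 = j + 1 := ha'i
        rw [this, haj]
        have := hsub (τq 1) (τd j)
        linarith
      · have hne : m + 1 ≠ 1 := by omega
        have hsm : (m + 1) - 1 = m := by omega
        have ham : a' m = a m := by simp [ha', Nat.lt_succ_of_le (le_refl m)]
        have hmono : a m ≤ a (m + 1) := ha.2 m (m + 1) hm (by omega) le_rfl
        rw [haj] at hmono
        rcases eq_or_ne (a m) j with hc | hc
        · -- c = j : original is Del, new is Sub
          have e1 : cc τq τd sub a (m + 1) = sub (τq (m+1)) (τd j) := by
            rw [cc_del τq τd sub a hne (by rw [hsm, hc, haj]), haj]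
          have e2 : cc τq τd sub a' (m + 1) = sub (τq (m+1)) (τd (j+1)) := by
            rw [cc_subst τq τd sub a' hne (by rw [hsm, ham, hc, ha'i]; omega)
              (by rw [hsm, ham, hc, ha'i]; omega), ha'i]
          rw [e1, e2]
          have := hsub (τq (m+1)) (τd j)
          linarith
        rcases eq_or_ne (a m) (j - 1) with hc1 | hc1
        · -- c = j - 1
          have hj1 : a m = j - 1 := hc1
          have e1 : cc τq τd sub a (m + 1) = sub (τq (m+1)) (τd j) := by
            rw [cc_subst τq τd sub a hne (by rw [hsm, haj]; exact hc)
              (by rw [hsm, haj]; exact hc1), haj]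
          have e2 : cc τq τd sub a' (m + 1) =
              iCost τq τd sub (m+1) (j - 1) (j + 1) := by
            rw [cc_ins τq τd sub a' hne (by rw [hsm, ham, ha'i]; omega)
              (by rw [hsm, ham, ha'i]; omega), hsm, ham, ha'i, hj1]
          rw [e1, e2]
          have hle : iCost τq τd sub (m+1) (j - 1) (j + 1) ≤
              (∑ p ∈ Finset.Icc (j - 1 + 1) (j - 1), sub (τq ((m+1) - 1)) (τd p)) +
                ∑ p ∈ Finset.Icc (j - 1 + 1) (j + 1), sub (τq (m+1)) (τd p) :=
            iCost_le τq τd sub hsub le_rfl (by omega)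
          have hj1' : j - 1 + 1 = j := by omega
          rw [hj1'] at hle
          rw [show Finset.Icc j (j-1) = ∅ by rw [Finset.Icc_eq_empty]; omega] at hle
          rw [Finset.sum_Icc_succ_top (by omega : j ≤ j + 1), Finset.Icc_self,
            Finset.sum_singleton] at hle
          simp only [Finset.sum_empty, zero_add] at hle
          linarith
        · -- c < j - 1 : both insertion costs
          have hlt : a m ≤ j - 1 := by omega
          have e1 : cc τq τd sub a (m + 1) = iCost τq τd sub (m+1) (a m) j := by
            rw [cc_ins τq τd sub a hne (by rw [hsm, haj]; exact hc)
              (by rw [hsm, haj]; exact hc1), hsm, haj]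
          have e2 : cc τq τd sub a' (m + 1) = iCost τq τd sub (m+1) (a m) (j + 1) := by
            rw [cc_ins τq τd sub a' hne (by rw [hsm, ham, ha'i]; omega)
              (by rw [hsm, ham, ha'i]; omega), hsm, ham, ha'i]
          rw [e1, e2]
          exact iCost_step τq τd sub hsub (by omega) hj
    linarith
  calc dtwCpm τq τd sub n (m+1) (j+1) ≤ tC τq τd sub (m+1) a' :=
        C_le τq τd sub hsub ha'm ha'i
    _ ≤ _ := key

/-- Iterated B1: `C(i, j) ≤ C(i, k) + Σ_{p=k+1}^{j} sub(τq i, τd p)`. -/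
lemma C_walk {n i k j : ℕ} (hi : 1 ≤ i) (hk : 1 ≤ k) (hkj : k ≤ j) (hjn : j ≤ n) :
    dtwCpm τq τd sub n i j ≤ dtwCpm τq τd sub n i k +
      ∑ p ∈ Finset.Icc (k + 1) j, sub (τq i) (τd p) := by
  induction j, hkj using Nat.le_induction with
  | base =>
      rw [show Finset.Icc (k+1) k = ∅ by rw [Finset.Icc_eq_empty]; omega]
      simp
  | succ j hkj ih =>
      have h1 := C_step τq τd sub hsub hi (by omega) hjn
      have h2 := ih (by omega)
      rw [Finset.sum_Icc_succ_top (by omega : k + 1 ≤ j + 1)]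
      linarith

/-- Extension with an insertion/substitution at the new last row. -/
lemma C_ext_ins {n m k t j : ℕ} (hm : 1 ≤ m) {a : ℕ → ℕ} (ha : IsMatchingOn m 1 n a)
    (hk : a m = k) (hkt : k ≤ t) (ht : t ≤ j - 1) (hjn : j ≤ n) :
    dtwCpm τq τd sub n (m + 1) j ≤ tC τq τd sub m a +
      ((∑ p ∈ Finset.Icc (k + 1) t, sub (τq m) (τd p)) +
        ∑ p ∈ Finset.Icc (t + 1) j, sub (τq (m + 1)) (τd p)) := by
  have hk1 : 1 ≤ k := by have := (ha.1 m hm le_rfl).1; omega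
  have hj2 : 2 ≤ j := by omega
  set a' : ℕ → ℕ := fun l => if l < m + 1 then a l else j with ha'
  have ha'm : IsMatchingOn (m + 1) 1 n a' := by
    constructor
    · intro l hl1 hl2
      simp only [ha']
      split_ifs with h
      · exact ha.1 l hl1 (by omega)
      · omega
    · intro p q hp hpq hq
      simp only [ha']
      split_ifs with h1 h2
      · exact ha.2 p q hp hpq (by omega)
      · have := ha.2 p m hp (by omega) le_rfl
        omega
      · omega
      · omega
  have ha'i : a' (m + 1) = j := by simp [ha']
  have ham : a' m = a m := by simp [ha']
  have hne : m + 1 ≠ 1 := by omega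
  have hsm : (m + 1) - 1 = m := by omega
  have htc : tC τq τd sub (m + 1) a' = tC τq τd sub m a + cc τq τd sub a' (m + 1) := by
    rw [tC_succ, tC_congr τq τd sub (a := a') (b := a) (m := m)
      (fun l hl1 hl2 => by simp [ha', Nat.lt_succ_of_le hl2]; omega)]
  have hC := C_le τq τd sub hsub ha'm ha'i
  rw [htc] at hC
  rcases eq_or_ne k (j - 1) with hc | hc
  · -- k = j - 1 : substitution
    have e : cc τq τd sub a' (m + 1) = sub (τq (m + 1)) (τd j) := by
      rw [cc_subst τq τd sub a' hne (by rw [hsm, ham, hk, ha'i]; omega)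
        (by rw [hsm, ham, hk, ha'i]; omega), ha'i]
    have htj : t = j - 1 := by omega
    subst htj
    rw [show Finset.Icc (k + 1) (j - 1) = ∅ by rw [Finset.Icc_eq_empty]; omega,
      show Finset.Icc (j - 1 + 1) j = {j} by rw [show j - 1 + 1 = j by omega, Finset.Icc_self]]
    rw [e] at hC
    simp only [Finset.sum_empty, Finset.sum_singleton, zero_add]
    exact hC
  · -- k < j - 1 : insertion
    have e : cc τq τd sub a' (m + 1) = iCost τq τd sub (m + 1) k j := by
      rw [cc_ins τq τd sub a' hne (by rw [hsm, ham, hk, ha'i]; omega)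
        (by rw [hsm, ham, hk, ha'i]; omega), hsm, ham, hk, ha'i]
    have hle : iCost τq τd sub (m + 1) k j ≤
        (∑ p ∈ Finset.Icc (k + 1) t, sub (τq ((m + 1) - 1)) (τd p)) +
          ∑ p ∈ Finset.Icc (t + 1) j, sub (τq (m + 1)) (τd p) :=
      iCost_le τq τd sub hsub hkt ht
    rw [hsm] at hle
    rw [e] at hC
    linarith

/-- Extension with a deletion at the new last row. -/
lemma C_ext_del {n m j : ℕ} (hm : 1 ≤ m) {a : ℕ → ℕ} (ha : IsMatchingOn m 1 n a)
    (hk : a m = j) :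
    dtwCpm τq τd sub n (m + 1) j ≤ tC τq τd sub m a + sub (τq (m + 1)) (τd j) := by
  have hj1 : 1 ≤ j := by have := (ha.1 m hm le_rfl).1; omega
  set a' : ℕ → ℕ := fun l => if l < m + 1 then a l else j with ha'
  have ha'm : IsMatchingOn (m + 1) 1 n a' := by
    constructor
    · intro l hl1 hl2
      simp only [ha']
      split_ifs with h
      · exact ha.1 l hl1 (by omega)
      · have := (ha.1 m hm le_rfl).2
        omega
    · intro p q hp hpq hq
      simp only [ha']
      split_ifs with h1 h2
      · exact ha.2 p q hp hpq (by omega)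
      · have := ha.2 p m hp (by omega) le_rfl
        omega
      · omega
      · omega
  have ha'i : a' (m + 1) = j := by simp [ha']
  have ham : a' m = a m := by simp [ha']
  have hne : m + 1 ≠ 1 := by omega
  have hsm : (m + 1) - 1 = m := by omega
  have htc : tC τq τd sub (m + 1) a' = tC τq τd sub m a + cc τq τd sub a' (m + 1) := by
    rw [tC_succ, tC_congr τq τd sub (a := a') (b := a) (m := m)
      (fun l hl1 hl2 => by simp [ha', Nat.lt_succ_of_le hl2]; omega)]
  have e : cc τq τd sub a' (m + 1) = sub (τq (m + 1)) (τd j) := by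
    rw [cc_del τq τd sub a' hne (by rw [hsm, ham, hk, ha'i]), ha'i]
  have hC := C_le τq τd sub hsub ha'm ha'i
  rw [htc, e] at hC
  exact hC

omit hsub

lemma tC_ones {i : ℕ} {a : ℕ → ℕ} (h : ∀ l, 1 ≤ l → l ≤ i → a l = 1) :
    tC τq τd sub i a = ∑ k ∈ Finset.Icc 1 i, sub (τq k) (τd 1) := by
  rw [tC_def]
  refine Finset.sum_congr rfl fun k hk => ?_
  rw [Finset.mem_Icc] at hk
  rcases eq_or_ne k 1 with rfl | hne
  · rw [cc_one, h 1 le_rfl hk.2]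
  · rw [cc_del τq τd sub a hne (by rw [h _ (by omega) (by omega), h _ hk.1 hk.2]),
      h _ hk.1 hk.2]

include hsub

lemma C_col {n i : ℕ} (hn : 1 ≤ n) (hi : 1 ≤ i) :
    dtwCpm τq τd sub n i 1 = ∑ k ∈ Finset.Icc 1 i, sub (τq k) (τd 1) := by
  apply le_antisymm
  · have hmatch : IsMatchingOn i 1 n (fun _ => 1) :=
      ⟨fun l _ _ => ⟨le_rfl, hn⟩, fun p q _ _ _ => le_rfl⟩
    have := C_le τq τd sub hsub hmatch rfl
    rwa [tC_ones τq τd sub (fun l _ _ => rfl)] at this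
  · refine le_C τq τd sub le_rfl hn fun a ha hai => ?_
    have hones : ∀ l, 1 ≤ l → l ≤ i → a l = 1 := by
      intro l hl1 hl2
      have h1 := (ha.1 l hl1 hl2).1
      have h2 := ha.2 l i hl1 hl2 le_rfl
      omega
    rw [tC_ones τq τd sub hones]

lemma C_row1 {n j : ℕ} (hj1 : 1 ≤ j) (hjn : j ≤ n) :
    dtwCpm τq τd sub n 1 j = sub (τq 1) (τd j) := by
  apply le_antisymm
  · have hmatch : IsMatchingOn 1 1 n (fun _ => j) :=
      ⟨fun l _ _ => ⟨hj1, hjn⟩, fun p q _ _ _ => le_rfl⟩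
    have := C_le τq τd sub hsub hmatch rfl
    rwa [tC_def, Finset.Icc_self, Finset.sum_singleton, cc_one] at this
  · refine le_C τq τd sub hj1 hjn fun a ha hai => ?_
    rw [tC_def, Finset.Icc_self, Finset.sum_singleton, cc_one, hai]

end DTW

/-- The DTW partial cost satisfies `C(1,j) = sub(τq[1],τd[j])` for
`1 ≤ j ≤ n`; `C(i,1) = C(i−1,1) + sub(τq[i],τd[1])` for `1 < i ≤ m`; and
`C(i,j) = min{ C(i−1,j), C(i,j−1), C(i−1,j−1) } + sub(τq[i],τd[j])` for
`1 < i ≤ m` and `1 < j ≤ n`. -/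
theorem dtwCpm_recurrence {P : Type*}
    (m n : ℕ) (hm : 1 ≤ m) (hn : 1 ≤ n)
    (τq τd : ℕ → P) (sub : P → P → ℝ) (hsub : ∀ p q, 0 ≤ sub p q) :
    (∀ j, 1 ≤ j → j ≤ n → dtwCpm τq τd sub n 1 j = sub (τq 1) (τd j)) ∧
    (∀ i, 1 < i → i ≤ m →
      dtwCpm τq τd sub n i 1 = dtwCpm τq τd sub n (i - 1) 1 + sub (τq i) (τd 1)) ∧
    (∀ i j, 1 < i → i ≤ m → 1 < j → j ≤ n →
      dtwCpm τq τd sub n i j =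
        min (min (dtwCpm τq τd sub n (i - 1) j) (dtwCpm τq τd sub n i (j - 1)))
          (dtwCpm τq τd sub n (i - 1) (j - 1)) + sub (τq i) (τd j)) := by
  refine ⟨fun j hj1 hjn => DTW.C_row1 τq τd sub hsub hj1 hjn, ?_, ?_⟩
  · intro i hi1 him
    rw [DTW.C_col τq τd sub hsub hn (by omega), DTW.C_col τq τd sub hsub hn (by omega)]
    obtain ⟨k, rfl⟩ : ∃ k, i = k + 1 := ⟨i - 1, by omega⟩
    rw [Finset.sum_Icc_succ_top (by omega : 1 ≤ k + 1)]
    simp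
  · intro i j hi1 him hj1 hjn
    obtain ⟨mm, rfl⟩ : ∃ mm, i = mm + 1 := ⟨i - 1, by omega⟩
    have hmm : 1 ≤ mm := by omega
    have hsm : mm + 1 - 1 = mm := by omega
    rw [hsm]
    set C := dtwCpm τq τd sub n with hC
    set s : ℝ := sub (τq (mm + 1)) (τd j) with hs
    apply le_antisymm
    · -- ≤ : three upper bounds
      have h1 : C (mm + 1) j ≤ C mm j + s := by
        rw [← sub_le_iff_le_add, hC, DTW.dtw_eq]
        refine le_csInf (DTW.mSet_nonempty τq τd sub (by omega) hjn) ?_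
        rintro v ⟨a, ha, haj, rfl⟩
        rw [sub_le_iff_le_add]
        exact DTW.C_ext_del τq τd sub hsub hmm ha haj
      have h2 : C (mm + 1) j ≤ C (mm + 1) (j - 1) + s := by
        have := DTW.C_step τq τd sub hsub (n := n) (i := mm + 1) (j := j - 1) (by omega) (by omega)
          (by omega)
        rw [show j - 1 + 1 = j by omega] at this
        exact this
      have h3 : C (mm + 1) j ≤ C mm (j - 1) + s := by
        rw [← sub_le_iff_le_add, hC, DTW.dtw_eq]
        refine le_csInf (DTW.mSet_nonempty τq τd sub (by omega) (by omega)) ?_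
        rintro v ⟨a, ha, haj, rfl⟩
        rw [sub_le_iff_le_add]
        have := DTW.C_ext_ins τq τd sub hsub (t := j - 1) (j := j) hmm ha haj le_rfl
          le_rfl hjn
        rw [show Finset.Icc (j - 1 + 1) (j - 1) = ∅ by rw [Finset.Icc_eq_empty]; omega,
          show Finset.Icc (j - 1 + 1) j = {j} by
            rw [show j - 1 + 1 = j by omega, Finset.Icc_self]] at this
        simp at this
        exact this
      rw [← sub_le_iff_le_add, le_min_iff, le_min_iff]
      exact ⟨⟨by linarith, by linarith⟩, by linarith⟩
    · -- ≥ direction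
      refine DTW.le_C τq τd sub (by omega) hjn fun a ha haj => ?_
      rw [DTW.tC_succ]
      have hrestr : IsMatchingOn mm 1 n a :=
        ⟨fun l h1 h2 => ha.1 l h1 (by omega), fun p q h1 h2 h3 => ha.2 p q h1 h2 (by omega)⟩
      have hk1 : 1 ≤ a mm := (ha.1 mm hmm (by omega)).1
      have hkj : a mm ≤ j := by
        have := ha.2 mm (mm + 1) hmm (by omega) le_rfl
        omega
      have hne : mm + 1 ≠ 1 := by omega
      set M : ℝ := min (min (C mm j) (C (mm + 1) (j - 1))) (C mm (j - 1)) with hM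
      rcases eq_or_ne (a mm) j with hc | hc
      · -- deletion
        have e : DTW.cc τq τd sub a (mm + 1) = s := by
          rw [DTW.cc_del τq τd sub a hne (by rw [hsm, hc, haj]), haj]
        have h1 : C mm j ≤ DTW.tC τq τd sub mm a := DTW.C_le τq τd sub hsub hrestr hc
        have h2 : M ≤ C mm j := le_trans (min_le_left _ _) (min_le_left _ _)
        rw [e]; linarith
      rcases eq_or_ne (a mm) (j - 1) with hc1 | hc1
      · -- substitution
        have e : DTW.cc τq τd sub a (mm + 1) = s := by
          rw [DTW.cc_subst τq τd sub a hne (by rw [hsm, haj]; omega)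
            (by rw [hsm, haj]; omega), haj]
        have h1 : C mm (j - 1) ≤ DTW.tC τq τd sub mm a := DTW.C_le τq τd sub hsub hrestr hc1
        have h2 : M ≤ C mm (j - 1) := min_le_right _ _
        rw [e]; linarith
      · -- insertion
        have hklt : a mm ≤ j - 2 := by omega
        have e : DTW.cc τq τd sub a (mm + 1) = DTW.iCost τq τd sub (mm + 1) (a mm) j := by
          rw [DTW.cc_ins τq τd sub a hne (by rw [hsm, haj]; omega)
            (by rw [hsm, haj]; omega), hsm, haj]
        rw [e, ← sub_le_iff_le_add']
        rw [show (DTW.iCost τq τd sub (mm + 1) (a mm) j) =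
          DTW.iCost τq τd sub (mm + 1) (a mm) j from rfl]
        refine DTW.le_iCost τq τd sub (by omega) fun t hkt ht => ?_
        rw [hsm]
        rw [sub_le_iff_le_add']
        rcases eq_or_ne t (j - 1) with rfl | htj
        · -- t = j - 1
          have hw := DTW.C_walk τq τd sub hsub (n := n) (i := mm) (k := a mm) (j := j - 1)
            hmm hk1 (by omega) (by omega)
          have hck : C mm (a mm) ≤ DTW.tC τq τd sub mm a := DTW.C_le τq τd sub hsub hrestr rfl
          have hMle : M ≤ C mm (j - 1) := min_le_right _ _
          rw [show Finset.Icc (j - 1 + 1) j = {j} by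
            rw [show j - 1 + 1 = j by omega, Finset.Icc_self], Finset.sum_singleton]
          have : ∑ p ∈ Finset.Icc (a mm + 1) (j - 1), sub (τq mm) (τd p) =
              ∑ p ∈ Finset.Icc (a mm + 1) (j - 1), sub (τq mm) (τd p) := rfl
          linarith
        · -- t < j - 1
          have hext := DTW.C_ext_ins τq τd sub hsub (t := t) (j := j - 1) hmm hrestr rfl
            hkt (by omega) (by omega)
          have hMle : M ≤ C (mm + 1) (j - 1) :=
            le_trans (min_le_left _ _) (min_le_right _ _)
          have hsplit : ∑ p ∈ Finset.Icc (t + 1) j, sub (τq (mm + 1)) (τd p) =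
              (∑ p ∈ Finset.Icc (t + 1) (j - 1), sub (τq (mm + 1)) (τd p)) + s := by
            rw [← show j - 1 + 1 = j by omega,
              Finset.sum_Icc_succ_top (by omega : t + 1 ≤ j - 1 + 1)]
            rw [show j - 1 + 1 = j by omega]
          rw [hsplit]
          linarith
end

section
/- Define the array D(i,j) for 1 ≤ i ≤ m, 1 ≤ j ≤ n by D(1,j) = sub(τq[1],τd[j]); D(i,1) = D(i−1,1) + sub(τq[i],τd[1]) for i > 1; and D(i,j) = min{ D(i−1,j), D(i,j−1), D(i−1,j−1) } + sub(τq[i],τd[j]) for i > 1 and j > 1. Then the minimum over 1 ≤ j ≤ n of D(m,j) equals the minimum over all 1 ≤ i ≤ j ≤ n of dtw(τq, τd[i:j]). -/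
/-- The DTW distance `dtw(σ[1:i], ρ[1:j])` between the length-`i` prefix of `σ` and the
length-`j` prefix of `ρ`, defined by the standard recurrence (the values for `i = 0` or
`j = 0` are irrelevant placeholders). -/
noncomputable def dtwA {P : Type*} (sub : P → P → ℝ) (σ ρ : ℕ → P) : ℕ → ℕ → ℝ
  | 0, _ => 0
  | _ + 1, 0 => 0
  | 1, j + 1 => ∑ k ∈ Finset.Icc 1 (j + 1), sub (σ 1) (ρ k)
  | i + 2, 1 => ∑ k ∈ Finset.Icc 1 (i + 2), sub (σ k) (ρ 1)
  | i + 2, j + 2 =>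
      min (min (dtwA sub σ ρ (i + 1) (j + 2)) (dtwA sub σ ρ (i + 2) (j + 1)))
        (dtwA sub σ ρ (i + 1) (j + 1)) + sub (σ (i + 2)) (ρ (j + 2))

lemma dtwA_one {P : Type*} (sub : P → P → ℝ) (σ ρ : ℕ → P) {j : ℕ} (hj : 1 ≤ j) :
    dtwA sub σ ρ 1 j = ∑ k ∈ Finset.Icc 1 j, sub (σ 1) (ρ k) := by
  obtain ⟨j, rfl⟩ : ∃ j', j = j' + 1 := ⟨j - 1, by omega⟩
  simp [dtwA]

lemma dtwA_i1 {P : Type*} (sub : P → P → ℝ) (σ ρ : ℕ → P) {i : ℕ} (hi : 1 ≤ i) :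
    dtwA sub σ ρ i 1 = ∑ k ∈ Finset.Icc 1 i, sub (σ k) (ρ 1) := by
  match i, hi with
  | 1, _ => simp [dtwA]
  | (i + 2), _ => simp [dtwA]

lemma dtwA_rec {P : Type*} (sub : P → P → ℝ) (σ ρ : ℕ → P) {i j : ℕ}
    (hi : 2 ≤ i) (hj : 2 ≤ j) :
    dtwA sub σ ρ i j = min (min (dtwA sub σ ρ (i - 1) j) (dtwA sub σ ρ i (j - 1)))
      (dtwA sub σ ρ (i - 1) (j - 1)) + sub (σ i) (ρ j) := by
  obtain ⟨i, rfl⟩ : ∃ i', i = i' + 2 := ⟨i - 2, by omega⟩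
  obtain ⟨j, rfl⟩ : ∃ j', j = j' + 2 := ⟨j - 2, by omega⟩
  simp [dtwA]

lemma inf'_Icc_one {f : ℕ → ℝ} (h : (Finset.Icc 1 1).Nonempty) :
    (Finset.Icc 1 1).inf' h f = f 1 := by
  apply le_antisymm (Finset.inf'_le _ (by simp))
  apply Finset.le_inf'
  intro s hs
  rw [Finset.mem_Icc] at hs
  have : s = 1 := by omega
  rw [this]

lemma dtw_key {P : Type*}
    (m n : ℕ)
    (τq τd : ℕ → P) (sub : P → P → ℝ) (hsub : ∀ p q, 0 ≤ sub p q)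
    (D : ℕ → ℕ → ℝ)
    (hD1 : ∀ j, 1 ≤ j → j ≤ n → D 1 j = sub (τq 1) (τd j))
    (hDi1 : ∀ i, 1 < i → i ≤ m → D i 1 = D (i - 1) 1 + sub (τq i) (τd 1))
    (hDij : ∀ i j, 1 < i → i ≤ m → 1 < j → j ≤ n →
      D i j = min (min (D (i - 1) j) (D i (j - 1))) (D (i - 1) (j - 1))
        + sub (τq i) (τd j)) :
    ∀ i, 1 ≤ i → i ≤ m → ∀ j, ∀ hj : 1 ≤ j, j ≤ n →
      D i j = (Finset.Icc 1 j).inf' (Finset.nonempty_Icc.mpr hj)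
        (fun s => dtwA sub τq (fun t => τd (s + t - 1)) i (j - s + 1)) := by
  intro i hi1
  induction i, hi1 using Nat.le_induction with
  | base =>
    intro _ j hj hjn
    rw [hD1 j hj hjn]
    apply le_antisymm
    · apply Finset.le_inf'
      intro s hs
      rw [Finset.mem_Icc] at hs
      show sub (τq 1) (τd j) ≤ dtwA sub τq (fun t => τd (s + t - 1)) 1 (j - s + 1)
      rw [dtwA_one sub τq _ (by omega : 1 ≤ j - s + 1)]
      have hmem : j - s + 1 ∈ Finset.Icc 1 (j - s + 1) := Finset.mem_Icc.mpr ⟨by omega, le_rfl⟩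
      have := Finset.single_le_sum (f := fun k => sub (τq 1) (τd (s + k - 1)))
        (fun k _ => hsub _ _) hmem
      simpa [show s + (j - s + 1) - 1 = j by omega] using this
    · have hjmem : j ∈ Finset.Icc 1 j := Finset.mem_Icc.mpr ⟨hj, le_rfl⟩
      refine le_trans (Finset.inf'_le _ hjmem) ?_
      show dtwA sub τq (fun t => τd (j + t - 1)) 1 (j - j + 1) ≤ sub (τq 1) (τd j)
      rw [show j - j + 1 = 1 by omega, dtwA_one sub τq _ (le_rfl : (1:ℕ) ≤ 1)]
      simp [show j + 1 - 1 = j by omega]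
  | succ i hi ih =>
    intro him1 j hj hjn
    have him : i ≤ m := by omega
    induction j, hj using Nat.le_induction with
    | base =>
      rw [hDi1 (i+1) (by omega) him1]
      simp only [Nat.add_sub_cancel]
      rw [ih him 1 le_rfl (by omega)]
      rw [inf'_Icc_one, inf'_Icc_one]
      show dtwA sub τq (fun t => τd (1 + t - 1)) i 1 + sub (τq (i+1)) (τd 1)
        = dtwA sub τq (fun t => τd (1 + t - 1)) (i + 1) 1
      rw [dtwA_i1 sub τq _ (by omega : 1 ≤ i + 1), dtwA_i1 sub τq _ hi]
      rw [Finset.sum_Icc_succ_top (by omega : 1 ≤ i + 1)]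
    | succ j hj ihj =>
      have hjn' : j ≤ n := by omega
      have hrecD := hDij (i+1) (j+1) (by omega) him1 (by omega) hjn
      simp only [Nat.add_sub_cancel] at hrecD
      set F : ℕ → ℕ → ℕ → ℝ :=
        fun a b s => dtwA sub τq (fun t => τd (s + t - 1)) a (b - s + 1) with hF
      have hIH1 : D i (j+1) = (Finset.Icc 1 (j+1)).inf'
          (Finset.nonempty_Icc.mpr (by omega)) (fun s => F i (j+1) s) :=
        ih him (j+1) (by omega) hjn
      have hIH2 : D (i+1) j = (Finset.Icc 1 j).inf'
          (Finset.nonempty_Icc.mpr hj) (fun s => F (i+1) j s) := ihj hjn'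
      have hIH3 : D i j = (Finset.Icc 1 j).inf'
          (Finset.nonempty_Icc.mpr hj) (fun s => F i j s) :=
        ih him j hj hjn'
      have hFrec : ∀ s, 1 ≤ s → s ≤ j →
          F (i+1) (j+1) s = min (min (F i (j+1) s) (F (i+1) j s)) (F i j s)
            + sub (τq (i+1)) (τd (j+1)) := by
        intro s hs1 hsj
        have h2 : 2 ≤ (j+1) - s + 1 := by omega
        rw [hF]
        simp only
        rw [dtwA_rec sub τq _ (by omega : 2 ≤ i + 1) h2]
        have e1 : i + 1 - 1 = i := by omega
        have e2 : (j+1) - s + 1 - 1 = j - s + 1 := by omega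
        have e3 : s + ((j+1) - s + 1) - 1 = j + 1 := by omega
        rw [e1, e2, e3]
      have hFtop : F (i+1) (j+1) (j+1) = F i (j+1) (j+1) + sub (τq (i+1)) (τd (j+1)) := by
        rw [hF]; simp only
        rw [show (j+1) - (j+1) + 1 = 1 by omega]
        rw [dtwA_i1 sub τq _ (by omega : 1 ≤ i + 1), dtwA_i1 sub τq _ hi]
        rw [Finset.sum_Icc_succ_top (by omega : 1 ≤ i + 1)]
        simp [show j + 1 + 1 - 1 = j + 1 by omega]
      rw [hrecD]
      apply le_antisymm
      · apply Finset.le_inf'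
        intro s hs
        rw [Finset.mem_Icc] at hs
        show min (min (D i (j+1)) (D (i+1) j)) (D i j) + sub (τq (i+1)) (τd (j+1))
          ≤ F (i+1) (j+1) s
        rcases eq_or_lt_of_le hs.2 with heq | hlt
        · rw [heq, hFtop]
          have h1 : D i (j+1) ≤ F i (j+1) (j+1) := by
            rw [hIH1]; exact Finset.inf'_le _ (Finset.mem_Icc.mpr ⟨by omega, le_rfl⟩)
          have h' : min (min (D i (j+1)) (D (i+1) j)) (D i j) ≤ D i (j+1) :=
            le_trans (min_le_left _ _) (min_le_left _ _)
          linarith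
        · have hsj : s ≤ j := by omega
          rw [hFrec s hs.1 hsj]
          have h1 : D i (j+1) ≤ F i (j+1) s := by
            rw [hIH1]; exact Finset.inf'_le _ (Finset.mem_Icc.mpr ⟨hs.1, by omega⟩)
          have h2 : D (i+1) j ≤ F (i+1) j s := by
            rw [hIH2]; exact Finset.inf'_le _ (Finset.mem_Icc.mpr ⟨hs.1, hsj⟩)
          have h3 : D i j ≤ F i j s := by
            rw [hIH3]; exact Finset.inf'_le _ (Finset.mem_Icc.mpr ⟨hs.1, hsj⟩)
          gcongr
      · have hne : (Finset.Icc 1 (j+1)).Nonempty := Finset.nonempty_Icc.mpr (by omega)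
        have key1 : (Finset.Icc 1 (j+1)).inf' hne (fun s => F (i+1) (j+1) s)
            ≤ D i (j+1) + sub (τq (i+1)) (τd (j+1)) := by
          obtain ⟨s, hs, hseq⟩ := Finset.exists_mem_eq_inf' (Finset.nonempty_Icc.mpr
            (by omega : 1 ≤ j + 1)) (fun s => F i (j+1) s)
          rw [Finset.mem_Icc] at hs
          rw [hIH1, hseq]
          have hstep : F (i+1) (j+1) s ≤ F i (j+1) s + sub (τq (i+1)) (τd (j+1)) := by
            rcases eq_or_lt_of_le hs.2 with heq | hlt
            · rw [heq]; exact le_of_eq hFtop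
            · rw [hFrec s hs.1 (by omega)]
              exact add_le_add (le_trans (min_le_left _ _) (min_le_left _ _)) le_rfl
          exact le_trans (Finset.inf'_le _ (Finset.mem_Icc.mpr hs)) hstep
        have key2 : (Finset.Icc 1 (j+1)).inf' hne (fun s => F (i+1) (j+1) s)
            ≤ D (i+1) j + sub (τq (i+1)) (τd (j+1)) := by
          obtain ⟨s, hs, hseq⟩ := Finset.exists_mem_eq_inf' (Finset.nonempty_Icc.mpr hj)
            (fun s => F (i+1) j s)
          rw [Finset.mem_Icc] at hs
          rw [hIH2, hseq]
          have hstep : F (i+1) (j+1) s ≤ F (i+1) j s + sub (τq (i+1)) (τd (j+1)) := by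
            rw [hFrec s hs.1 hs.2]
            exact add_le_add (le_trans (min_le_left _ _) (min_le_right _ _)) le_rfl
          exact le_trans (Finset.inf'_le _ (Finset.mem_Icc.mpr ⟨hs.1, by omega⟩)) hstep
        have key3 : (Finset.Icc 1 (j+1)).inf' hne (fun s => F (i+1) (j+1) s)
            ≤ D i j + sub (τq (i+1)) (τd (j+1)) := by
          obtain ⟨s, hs, hseq⟩ := Finset.exists_mem_eq_inf' (Finset.nonempty_Icc.mpr hj)
            (fun s => F i j s)
          rw [Finset.mem_Icc] at hs
          rw [hIH3, hseq]
          have hstep : F (i+1) (j+1) s ≤ F i j s + sub (τq (i+1)) (τd (j+1)) := by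
            rw [hFrec s hs.1 hs.2]
            exact add_le_add (min_le_right _ _) le_rfl
          exact le_trans (Finset.inf'_le _ (Finset.mem_Icc.mpr ⟨hs.1, by omega⟩)) hstep
        rcases min_cases (min (D i (j+1)) (D (i+1) j)) (D i j) with ⟨h, _⟩ | ⟨h, _⟩
        · rcases min_cases (D i (j+1)) (D (i+1) j) with ⟨h', _⟩ | ⟨h', _⟩
          · rw [h, h']; exact key1
          · rw [h, h']; exact key2
        · rw [h]; exact key3

/-- If `D` satisfies `D(1,j) = sub(τq[1],τd[j])`,
`D(i,1) = D(i−1,1) + sub(τq[i],τd[1])` for `i > 1`, and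
`D(i,j) = min{ D(i−1,j), D(i,j−1), D(i−1,j−1) } + sub(τq[i],τd[j])` for `i, j > 1`, then
`min_{1 ≤ j ≤ n} D(m,j) = min_{1 ≤ i ≤ j ≤ n} dtw(τq, τd[i:j])`. -/
theorem dtw_array_min_eq_min_subtrajectory_dtw {P : Type*}
    (m n : ℕ) (hm : 1 ≤ m) (hn : 1 ≤ n)
    (τq τd : ℕ → P) (sub : P → P → ℝ) (hsub : ∀ p q, 0 ≤ sub p q)
    (D : ℕ → ℕ → ℝ)
    (hD1 : ∀ j, 1 ≤ j → j ≤ n → D 1 j = sub (τq 1) (τd j))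
    (hDi1 : ∀ i, 1 < i → i ≤ m → D i 1 = D (i - 1) 1 + sub (τq i) (τd 1))
    (hDij : ∀ i j, 1 < i → i ≤ m → 1 < j → j ≤ n →
      D i j = min (min (D (i - 1) j) (D i (j - 1))) (D (i - 1) (j - 1))
        + sub (τq i) (τd j)) :
    sInf {v : ℝ | ∃ j : ℕ, 1 ≤ j ∧ j ≤ n ∧ v = D m j} =
      sInf {v : ℝ | ∃ i j : ℕ, 1 ≤ i ∧ i ≤ j ∧ j ≤ n ∧
        v = dtwA sub τq (fun t => τd (i + t - 1)) m (j - i + 1)} := by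
  have hkey := dtw_key m n τq τd sub hsub D hD1 hDi1 hDij m hm le_rfl
  set S1 : Set ℝ := {v : ℝ | ∃ j : ℕ, 1 ≤ j ∧ j ≤ n ∧ v = D m j} with hS1
  set S2 : Set ℝ := {v : ℝ | ∃ i j : ℕ, 1 ≤ i ∧ i ≤ j ∧ j ≤ n ∧
    v = dtwA sub τq (fun t => τd (i + t - 1)) m (j - i + 1)} with hS2
  have hS1fin : S1.Finite := by
    have : S1 ⊆ (fun j => D m j) '' (Set.Icc 1 n) := by
      rintro v ⟨j, hj1, hjn, rfl⟩
      exact ⟨j, Set.mem_Icc.mpr ⟨hj1, hjn⟩, rfl⟩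
    exact Set.Finite.subset ((Set.finite_Icc 1 n).image _) this
  have hS2fin : S2.Finite := by
    have : S2 ⊆ (fun p : ℕ × ℕ =>
        dtwA sub τq (fun t => τd (p.1 + t - 1)) m (p.2 - p.1 + 1)) ''
        (Set.Icc 1 n ×ˢ Set.Icc 1 n) := by
      rintro v ⟨i, j, hi1, hij, hjn, rfl⟩
      exact ⟨(i, j), Set.mem_prod.mpr ⟨Set.mem_Icc.mpr ⟨hi1, by omega⟩,
        Set.mem_Icc.mpr ⟨by omega, hjn⟩⟩, rfl⟩
    exact Set.Finite.subset (((Set.finite_Icc 1 n).prod (Set.finite_Icc 1 n)).image _) this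
  have hS1ne : S1.Nonempty := ⟨D m n, n, hn, le_rfl, rfl⟩
  have hS2ne : S2.Nonempty := ⟨_, n, n, hn, le_rfl, le_rfl, rfl⟩
  apply le_antisymm
  · apply le_csInf hS2ne
    rintro v ⟨i, j, hi1, hij, hjn, rfl⟩
    have hj1 : 1 ≤ j := by omega
    refine le_trans (csInf_le hS1fin.bddBelow ⟨j, hj1, hjn, rfl⟩) ?_
    rw [hkey j hj1 hjn]
    exact Finset.inf'_le _ (Finset.mem_Icc.mpr ⟨hi1, hij⟩)
  · apply le_csInf hS1ne
    rintro v ⟨j, hj1, hjn, rfl⟩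
    rw [hkey j hj1 hjn]
    obtain ⟨s, hs, hseq⟩ := Finset.exists_mem_eq_inf' (Finset.nonempty_Icc.mpr hj1)
      (fun s => dtwA sub τq (fun t => τd (s + t - 1)) m (j - s + 1))
    rw [Finset.mem_Icc] at hs
    rw [hseq]
    exact csInf_le hS2fin.bddBelow ⟨s, j, hs.1, hs.2, hjn, rfl⟩
end

section
/- For every matching sequence a : {1,…,m} → {1,…,n}, wed(τq, τd) ≤ Σ_{k=1}^{a(1)−1} ins(τd[k]) + Σ_{i=1}^{m} Cost(i,a) + Σ_{k=a(m)+1}^{n} ins(τd[k]). -/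
/-- The WED distance `wed(σ[1:i], ρ[1:j])` between the length-`i` prefix of `σ` and the
length-`j` prefix of `ρ`, defined by the standard recurrence with base cases against the
empty trajectory. -/
noncomputable def wedA {P : Type*} (del ins : P → ℝ) (sub : P → P → ℝ)
    (σ ρ : ℕ → P) : ℕ → ℕ → ℝ
  | 0, j => ∑ k ∈ Finset.Icc 1 j, ins (ρ k)
  | i + 1, 0 => ∑ k ∈ Finset.Icc 1 (i + 1), del (σ k)
  | i + 1, j + 1 =>
      min (min (wedA del ins sub σ ρ i j + sub (σ (i + 1)) (ρ (j + 1)))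
          (wedA del ins sub σ ρ (i + 1) j + ins (ρ (j + 1))))
        (wedA del ins sub σ ρ i (j + 1) + del (σ (i + 1)))


lemma wedA_ins_step {P : Type*} (del ins : P → ℝ) (sub : P → P → ℝ)
    (σ ρ : ℕ → P) (i j : ℕ) :
    wedA del ins sub σ ρ i (j + 1) ≤ wedA del ins sub σ ρ i j + ins (ρ (j + 1)) := by
  cases i with
  | zero =>
      simp [wedA, Finset.sum_Icc_succ_top (Nat.succ_le_succ (Nat.zero_le j))]
  | succ i =>
      rw [wedA]
      exact le_trans (min_le_left _ _) (min_le_right _ _)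

lemma wedA_ins_chain {P : Type*} (del ins : P → ℝ) (sub : P → P → ℝ)
    (σ ρ : ℕ → P) (i j : ℕ) : ∀ k, j ≤ k →
    wedA del ins sub σ ρ i k ≤
      wedA del ins sub σ ρ i j + ∑ t ∈ Finset.Icc (j + 1) k, ins (ρ t) := by
  intro k hk
  induction k, hk using Nat.le_induction with
  | base => simp
  | succ k hk ih =>
      calc wedA del ins sub σ ρ i (k + 1) ≤ wedA del ins sub σ ρ i k + ins (ρ (k + 1)) :=
            wedA_ins_step _ _ _ _ _ _ _
        _ ≤ wedA del ins sub σ ρ i j + ∑ t ∈ Finset.Icc (j + 1) k, ins (ρ t) + ins (ρ (k + 1)) := by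
            linarith
        _ = _ := by
            rw [Finset.sum_Icc_succ_top (Nat.succ_le_succ hk)]; ring

lemma wedA_sub_step {P : Type*} (del ins : P → ℝ) (sub : P → P → ℝ)
    (σ ρ : ℕ → P) (i j : ℕ) :
    wedA del ins sub σ ρ (i + 1) (j + 1) ≤
      wedA del ins sub σ ρ i j + sub (σ (i + 1)) (ρ (j + 1)) := by
  rw [wedA]
  exact le_trans (min_le_left _ _) (min_le_left _ _)

lemma wedA_del_step {P : Type*} (del ins : P → ℝ) (sub : P → P → ℝ)
    (σ ρ : ℕ → P) (i j : ℕ) :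
    wedA del ins sub σ ρ (i + 1) j ≤ wedA del ins sub σ ρ i j + del (σ (i + 1)) := by
  cases j with
  | zero =>
      cases i with
      | zero => simp [wedA]
      | succ i =>
          rw [wedA, wedA, Finset.sum_Icc_succ_top (Nat.succ_le_succ (Nat.zero_le _))]
  | succ j =>
      rw [wedA]
      exact min_le_right _ _

/-- For every matching sequence `a : {1,…,m} → {1,…,n}`,
`wed(τq, τd) ≤ Σ_{k=1}^{a(1)−1} ins(τd[k]) + Σ_{i=1}^{m} Cost(i,a) +
Σ_{k=a(m)+1}^{n} ins(τd[k])`, where `Cost` uses the WED conversion costs. -/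
theorem wed_le_matching_cost {P : Type*}
    (m n : ℕ) (hm : 1 ≤ m) (hn : 1 ≤ n)
    (τq τd : ℕ → P) (del ins : P → ℝ) (sub : P → P → ℝ) :
    ∀ a : ℕ → ℕ, IsMatchingOn m 1 n a →
      wedA del ins sub τq τd m n ≤
        (∑ k ∈ Finset.Icc 1 (a 1 - 1), ins (τd k)) +
        totalCost (fun i _ => del (τq i)) (fun i j => sub (τq i) (τd j))
          (fun i k j => (∑ t ∈ Finset.Icc (k + 1) (j - 1), ins (τd t)) + sub (τq i) (τd j))
          m a +
        ∑ k ∈ Finset.Icc (a m + 1) n, ins (τd k) := by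
  intro a ha
  obtain ⟨hbound, hmono⟩ := ha
  set C : ℕ → ℝ := convCost (fun i _ => del (τq i)) (fun i j => sub (τq i) (τd j))
      (fun i k j => (∑ t ∈ Finset.Icc (k + 1) (j - 1), ins (τd t)) + sub (τq i) (τd j)) a with hC
  have key : ∀ i, 1 ≤ i → i ≤ m →
      wedA del ins sub τq τd i (a i) ≤
        (∑ k ∈ Finset.Icc 1 (a 1 - 1), ins (τd k)) + ∑ k ∈ Finset.Icc 1 i, C k := by
    intro i hi
    induction i, hi using Nat.le_induction with
    | base =>
        intro _
        have h1 : 1 ≤ a 1 := (hbound 1 le_rfl hm).1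
        have hsplit : a 1 = (a 1 - 1) + 1 := (Nat.succ_pred_eq_of_pos h1).symm
        have hb : wedA del ins sub τq τd 1 (a 1) ≤
            wedA del ins sub τq τd 0 (a 1 - 1) + sub (τq 1) (τd (a 1)) := by
          have h := wedA_sub_step del ins sub τq τd 0 (a 1 - 1)
          rw [← hsplit] at h
          simpa using h
        have hc : C 1 = sub (τq 1) (τd (a 1)) := by simp [hC, convCost]
        simp only [Finset.Icc_self, Finset.sum_singleton, hc]
        calc wedA del ins sub τq τd 1 (a 1)
            ≤ wedA del ins sub τq τd 0 (a 1 - 1) + sub (τq 1) (τd (a 1)) := hb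
          _ = (∑ k ∈ Finset.Icc 1 (a 1 - 1), ins (τd k)) + sub (τq 1) (τd (a 1)) := by
              simp [wedA]
    | succ i hi ih =>
        intro him
        have him' : i ≤ m := le_trans (Nat.le_succ i) him
        have ih' := ih him'
        have hma : a i ≤ a (i + 1) := hmono i (i + 1) hi (Nat.le_succ i) him
        have hCsucc : ∑ k ∈ Finset.Icc 1 (i + 1), C k = (∑ k ∈ Finset.Icc 1 i, C k) + C (i + 1) :=
          Finset.sum_Icc_succ_top (Nat.succ_le_succ (Nat.zero_le i)) _
        have hne : i + 1 ≠ 1 := by omega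
        rcases eq_or_lt_of_le hma with heq | hlt
        · -- deletion case
          have hc : C (i + 1) = del (τq (i + 1)) := by
            simp [hC, convCost, hne, heq]
            intro h0; omega
          calc wedA del ins sub τq τd (i + 1) (a (i + 1))
              ≤ wedA del ins sub τq τd i (a (i + 1)) + del (τq (i + 1)) :=
                wedA_del_step _ _ _ _ _ _ _
            _ ≤ (∑ k ∈ Finset.Icc 1 (a 1 - 1), ins (τd k)) + (∑ k ∈ Finset.Icc 1 i, C k)
                  + del (τq (i + 1)) := by rw [← heq] at *; linarith
            _ = _ := by rw [hCsucc, hc]; ring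
        · -- substitution / insertion case
          have h1 : 1 ≤ a (i + 1) := by omega
          have hsplit : a (i + 1) = (a (i + 1) - 1) + 1 := (Nat.succ_pred_eq_of_pos h1).symm
          have hstep : wedA del ins sub τq τd (i + 1) (a (i + 1)) ≤
              wedA del ins sub τq τd i (a (i + 1) - 1) + sub (τq (i + 1)) (τd (a (i + 1))) := by
            have h := wedA_sub_step del ins sub τq τd i (a (i + 1) - 1)
            rw [← hsplit] at h
            exact h
          have hchain : wedA del ins sub τq τd i (a (i + 1) - 1) ≤
              wedA del ins sub τq τd i (a i) +
                ∑ t ∈ Finset.Icc (a i + 1) (a (i + 1) - 1), ins (τd t) :=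
            wedA_ins_chain del ins sub τq τd i (a i) (a (i + 1) - 1) (by omega)
          have hc : C (i + 1) =
              (∑ t ∈ Finset.Icc (a i + 1) (a (i + 1) - 1), ins (τd t))
                + sub (τq (i + 1)) (τd (a (i + 1))) := by
            by_cases hsub : a i = a (i + 1) - 1
            · have : Finset.Icc (a i + 1) (a (i + 1) - 1) = ∅ := by
                rw [Finset.Icc_eq_empty_iff]; omega
              simp [hC, convCost, hne, hsub, this]
              rw [if_neg (by omega), if_neg (by omega)]
            · have hne2 : a i ≠ a (i + 1) := by omega
              simp [hC, convCost, hne, hne2, hsub]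
              intro h0; omega
          calc wedA del ins sub τq τd (i + 1) (a (i + 1))
              ≤ wedA del ins sub τq τd i (a (i + 1) - 1) + sub (τq (i + 1)) (τd (a (i + 1))) := hstep
            _ ≤ wedA del ins sub τq τd i (a i) +
                  ((∑ t ∈ Finset.Icc (a i + 1) (a (i + 1) - 1), ins (τd t))
                    + sub (τq (i + 1)) (τd (a (i + 1)))) := by linarith
            _ ≤ (∑ k ∈ Finset.Icc 1 (a 1 - 1), ins (τd k)) + (∑ k ∈ Finset.Icc 1 i, C k)
                  + C (i + 1) := by rw [hc]; linarith
            _ = _ := by rw [hCsucc]; ring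
  have hfinal : wedA del ins sub τq τd m n ≤
      wedA del ins sub τq τd m (a m) + ∑ k ∈ Finset.Icc (a m + 1) n, ins (τd k) :=
    wedA_ins_chain del ins sub τq τd m (a m) n (hbound m hm le_rfl).2
  have hk := key m hm le_rfl
  unfold totalCost
  rw [← hC]
  linarith
end

section
/- dtw(τq, τd) equals the minimum, over all matching sequences a : {1,…,m} → {1,…,n}, of Σ_{k=1}^{a(1)−1} sub(τq[1],τd[k]) + Σ_{i=1}^{m} Cost(i,a) + Σ_{k=a(m)+1}^{n} sub(τq[m],τd[k]). -/
/-! Write `dtw(i, j)` for `dtwA sub τq τd i j`. Under any matching `a`, each conversion cost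
`Cost(i, a)` is at least `dtw(i, a i) - dtw(i - 1, a (i - 1))`: a deletion is a vertical step, a
substitution a diagonal step, and an insertion a horizontal run in row `i - 1` followed by a
diagonal step and a horizontal run in row `i`. Summing, and adding the tail `a m < k ≤ n` as a
horizontal run in row `m`, bounds `dtw(m, n)` by the cost of `a`. Conversely, unwinding the
recurrence builds a matching ending at `(m, n)` whose cost is at most `dtw(m, n)`; a horizontal
step of the recurrence moves the last matched index one to the right, which adds at most one
`sub` term because `sub ≥ 0`. -/

open Finset

lemma IsMatchingOn.of_le {m m' lo hi : ℕ} {a : ℕ → ℕ} (h : IsMatchingOn m lo hi a) (hm : m' ≤ m) :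
    IsMatchingOn m' lo hi a :=
  ⟨fun i hi1 him => h.1 i hi1 (him.trans hm), fun i j hi1 hij hjm => h.2 i j hi1 hij (hjm.trans hm)⟩

lemma IsMatchingOn.extend {m lo hi j : ℕ} {a : ℕ → ℕ} (h : IsMatchingOn m lo hi a)
    (hlo : lo ≤ j) (hhi : hi ≤ j) :
    IsMatchingOn (m + 1) lo j (fun k => if k ≤ m then a k else j) := by
  refine ⟨fun i hi1 him => ?_, fun i i' hi1 hii' hi'm => ?_⟩ <;> dsimp only
  · split_ifs with him'
    · exact ⟨(h.1 i hi1 him').1, (h.1 i hi1 him').2.trans hhi⟩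
    · exact ⟨hlo, le_rfl⟩
  · split_ifs with h1 h2 h2
    · exact h.2 i i' hi1 hii' h2
    · exact (h.1 i hi1 h1).2.trans hhi
    · omega
    · exact le_rfl

section DTWMatching

variable {P : Type*}

noncomputable def dtwInsCost (sub : P → P → ℝ) (τq τd : ℕ → P) (i k j : ℕ) : ℝ :=
  sInf {w : ℝ | ∃ t : ℕ, k ≤ t ∧ t ≤ j - 1 ∧
    w = (∑ p ∈ Icc (k + 1) t, sub (τq (i - 1)) (τd p)) + ∑ p ∈ Icc (t + 1) j, sub (τq i) (τd p)}

/-- `Cost(i, a)` for `i > 1`, as a function of `k = a(i-1)` and `j = a(i)`. -/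
noncomputable def dtwStepCost (sub : P → P → ℝ) (τq τd : ℕ → P) (i k j : ℕ) : ℝ :=
  if k = j then sub (τq i) (τd j)
  else if k = j - 1 then sub (τq i) (τd j)
  else dtwInsCost sub τq τd i k j

noncomputable def matchingPrefixCost (sub : P → P → ℝ) (τq τd : ℕ → P) (i : ℕ) (a : ℕ → ℕ) : ℝ :=
  (∑ k ∈ Icc 1 (a 1 - 1), sub (τq 1) (τd k)) +
    totalCost (fun i j => sub (τq i) (τd j)) (fun i j => sub (τq i) (τd j))
      (dtwInsCost sub τq τd) i a

noncomputable def matchingCost (sub : P → P → ℝ) (τq τd : ℕ → P) (m n : ℕ) (a : ℕ → ℕ) : ℝ :=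
  matchingPrefixCost sub τq τd m a + ∑ k ∈ Icc (a m + 1) n, sub (τq m) (τd k)

variable {sub : P → P → ℝ} {τq τd : ℕ → P} {i j k : ℕ}

lemma dtwInsCost_le (hsub : ∀ p q, 0 ≤ sub p q) (t : ℕ) (hkt : k ≤ t) (htj : t ≤ j - 1) :
    dtwInsCost sub τq τd i k j ≤
      (∑ p ∈ Icc (k + 1) t, sub (τq (i - 1)) (τd p)) + ∑ p ∈ Icc (t + 1) j, sub (τq i) (τd p) := by
  refine csInf_le ⟨0, ?_⟩ ⟨t, hkt, htj, rfl⟩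
  rintro w ⟨t, -, -, rfl⟩
  exact add_nonneg (sum_nonneg fun _ _ => hsub _ _) (sum_nonneg fun _ _ => hsub _ _)

lemma le_dtwInsCost {c : ℝ} (hkj : k ≤ j - 1)
    (h : ∀ t, k ≤ t → t ≤ j - 1 →
      c ≤ (∑ p ∈ Icc (k + 1) t, sub (τq (i - 1)) (τd p)) + ∑ p ∈ Icc (t + 1) j, sub (τq i) (τd p)) :
    c ≤ dtwInsCost sub τq τd i k j := by
  refine le_csInf ⟨_, k, le_rfl, hkj, rfl⟩ ?_
  rintro w ⟨t, hkt, htj, rfl⟩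
  exact h t hkt htj

lemma dtwInsCost_succ_le (hsub : ∀ p q, 0 ≤ sub p q) (hkj : k < j) :
    dtwInsCost sub τq τd i k (j + 1) ≤ dtwInsCost sub τq τd i k j + sub (τq i) (τd (j + 1)) := by
  rw [← sub_le_iff_le_add]
  refine le_dtwInsCost (by omega) fun t hkt htj => ?_
  have h := dtwInsCost_le (τq := τq) (τd := τd) (i := i) hsub t hkt (show t ≤ j + 1 - 1 by omega)
  rw [sum_Icc_succ_top (by omega)] at h
  linarith

lemma dtwStepCost_self : dtwStepCost sub τq τd i j j = sub (τq i) (τd j) := by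
  simp [dtwStepCost]

lemma dtwStepCost_succ : dtwStepCost sub τq τd i k (k + 1) = sub (τq i) (τd (k + 1)) := by
  simp [dtwStepCost]

lemma dtwStepCost_of_add_one_lt (hkj : k + 1 < j) :
    dtwStepCost sub τq τd i k j = dtwInsCost sub τq τd i k j := by
  rw [dtwStepCost, if_neg (by omega), if_neg (by omega)]

lemma dtwInsCost_le_dtwStepCost (hsub : ∀ p q, 0 ≤ sub p q) (hkj : k < j) :
    dtwInsCost sub τq τd i k j ≤ dtwStepCost sub τq τd i k j := by
  rcases (show k + 1 = j ∨ k + 1 < j by omega) with rfl | hkj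
  · simpa [dtwStepCost_succ] using
      dtwInsCost_le (τq := τq) (τd := τd) (i := i) (j := k + 1) hsub k le_rfl (by omega)
  · exact (dtwStepCost_of_add_one_lt hkj).ge

lemma dtwStepCost_succ_le (hsub : ∀ p q, 0 ≤ sub p q) (hkj : k ≤ j) :
    dtwStepCost sub τq τd i k (j + 1) ≤ dtwStepCost sub τq τd i k j + sub (τq i) (τd (j + 1)) := by
  rcases hkj.eq_or_lt with rfl | hkj
  · rw [dtwStepCost_succ, dtwStepCost_self]
    linarith [hsub (τq i) (τd k)]
  · rw [dtwStepCost_of_add_one_lt (by omega)]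
    linarith [dtwInsCost_succ_le (τq := τq) (τd := τd) (i := i) hsub hkj,
      dtwInsCost_le_dtwStepCost (τq := τq) (τd := τd) (i := i) hsub hkj]

lemma dtwA_one_left (hj : 1 ≤ j) : dtwA sub τq τd 1 j = ∑ k ∈ Icc 1 j, sub (τq 1) (τd k) := by
  obtain ⟨j, rfl⟩ := Nat.exists_eq_add_of_le' hj
  rw [dtwA]

lemma dtwA_one_right (hi : 1 ≤ i) : dtwA sub τq τd i 1 = ∑ k ∈ Icc 1 i, sub (τq k) (τd 1) := by
  obtain ⟨_ | i, rfl⟩ := Nat.exists_eq_add_of_le' hi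
  · simp [dtwA]
  · rw [dtwA]

lemma dtwA_succ_one (hi : 1 ≤ i) :
    dtwA sub τq τd (i + 1) 1 = dtwA sub τq τd i 1 + sub (τq (i + 1)) (τd 1) := by
  rw [dtwA_one_right hi, dtwA_one_right (by omega), sum_Icc_succ_top (by omega)]

lemma dtwA_succ_succ (hi : 1 ≤ i) (hj : 1 ≤ j) :
    dtwA sub τq τd (i + 1) (j + 1) =
      min (min (dtwA sub τq τd i (j + 1)) (dtwA sub τq τd (i + 1) j)) (dtwA sub τq τd i j) +
        sub (τq (i + 1)) (τd (j + 1)) := by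
  obtain ⟨i, rfl⟩ := Nat.exists_eq_add_of_le' hi
  obtain ⟨j, rfl⟩ := Nat.exists_eq_add_of_le' hj
  rw [dtwA]

lemma dtwA_succ_left_le (hi : 1 ≤ i) (hj : 1 ≤ j) :
    dtwA sub τq τd (i + 1) j ≤ dtwA sub τq τd i j + sub (τq (i + 1)) (τd j) := by
  obtain rfl | ⟨j, hj', rfl⟩ : j = 1 ∨ ∃ j', 1 ≤ j' ∧ j = j' + 1 := by
    rcases hj.eq_or_lt with h | h
    · exact .inl h.symm
    · exact .inr ⟨j - 1, by omega, by omega⟩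
  · exact (dtwA_succ_one hi).le
  · rw [dtwA_succ_succ hi hj']
    exact add_le_add_left ((min_le_left _ _).trans (min_le_left _ _)) _

lemma dtwA_succ_right_le (hi : 1 ≤ i) (hj : 1 ≤ j) :
    dtwA sub τq τd i (j + 1) ≤ dtwA sub τq τd i j + sub (τq i) (τd (j + 1)) := by
  obtain rfl | ⟨i, hi', rfl⟩ : i = 1 ∨ ∃ i', 1 ≤ i' ∧ i = i' + 1 := by
    rcases hi.eq_or_lt with h | h
    · exact .inl h.symm
    · exact .inr ⟨i - 1, by omega, by omega⟩
  · rw [dtwA_one_left hj, dtwA_one_left (by omega), sum_Icc_succ_top (by omega)]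
  · rw [dtwA_succ_succ hi' hj]
    exact add_le_add_left ((min_le_left _ _).trans (min_le_right _ _)) _

lemma dtwA_succ_succ_le (hi : 1 ≤ i) (hj : 1 ≤ j) :
    dtwA sub τq τd (i + 1) (j + 1) ≤ dtwA sub τq τd i j + sub (τq (i + 1)) (τd (j + 1)) := by
  rw [dtwA_succ_succ hi hj]
  exact add_le_add_left (min_le_right _ _) _

lemma dtwA_le_add_sum (hi : 1 ≤ i) (hj : 1 ≤ j) {j' : ℕ} (hjj' : j ≤ j') :
    dtwA sub τq τd i j' ≤ dtwA sub τq τd i j + ∑ k ∈ Icc (j + 1) j', sub (τq i) (τd k) := by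
  induction j', hjj' using Nat.le_induction with
  | base => simp
  | succ j' hjj' ih =>
    rw [sum_Icc_succ_top (by omega)]
    linarith [dtwA_succ_right_le (sub := sub) (τq := τq) (τd := τd) hi (hj.trans hjj')]

lemma dtwA_succ_le_add_dtwInsCost (hi : 1 ≤ i) (hk : 1 ≤ k) (hkj : k < j) :
    dtwA sub τq τd (i + 1) j ≤ dtwA sub τq τd i k + dtwInsCost sub τq τd (i + 1) k j := by
  rw [← sub_le_iff_le_add']
  refine le_dtwInsCost (by omega) fun t hkt htj => ?_
  rw [Nat.add_sub_cancel, sub_le_iff_le_add', ← add_sum_Ioc_eq_sum_Icc (by omega : t + 1 ≤ j),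
    ← Icc_add_one_left_eq_Ioc]
  calc dtwA sub τq τd (i + 1) j
      ≤ dtwA sub τq τd (i + 1) (t + 1) + ∑ p ∈ Icc (t + 1 + 1) j, sub (τq (i + 1)) (τd p) :=
        dtwA_le_add_sum (by omega) (by omega) (by omega)
    _ ≤ dtwA sub τq τd i t + sub (τq (i + 1)) (τd (t + 1)) +
          ∑ p ∈ Icc (t + 1 + 1) j, sub (τq (i + 1)) (τd p) := by
        gcongr
        exact dtwA_succ_succ_le hi (by omega)
    _ ≤ _ := by
        have := dtwA_le_add_sum (sub := sub) (τq := τq) (τd := τd) hi hk hkt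
        linarith

lemma dtwA_succ_le_add_dtwStepCost (hi : 1 ≤ i) (hk : 1 ≤ k) (hkj : k ≤ j) :
    dtwA sub τq τd (i + 1) j ≤ dtwA sub τq τd i k + dtwStepCost sub τq τd (i + 1) k j := by
  obtain rfl | rfl | hkj : k = j ∨ k + 1 = j ∨ k + 1 < j := by omega
  · rw [dtwStepCost_self]
    exact dtwA_succ_left_le hi hk
  · rw [dtwStepCost_succ]
    exact dtwA_succ_succ_le hi hk
  · rw [dtwStepCost_of_add_one_lt hkj]
    exact dtwA_succ_le_add_dtwInsCost hi hk (by omega)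

lemma convCost_congr_s11 {D S : ℕ → ℕ → ℝ} {I : ℕ → ℕ → ℕ → ℝ} {a b : ℕ → ℕ} (hi : 1 ≤ i)
    (h : ∀ k ≤ i, a k = b k) : convCost D S I a i = convCost D S I b i := by
  simp only [convCost, h i le_rfl, h (i - 1) (Nat.sub_le i 1), h 1 hi]

lemma matchingPrefixCost_congr {a b : ℕ → ℕ} (hi : 1 ≤ i) (h : ∀ k ≤ i, a k = b k) :
    matchingPrefixCost sub τq τd i a = matchingPrefixCost sub τq τd i b := by
  unfold matchingPrefixCost totalCost
  rw [h 1 hi]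
  congr 1
  refine sum_congr rfl fun k hk => ?_
  rw [mem_Icc] at hk
  exact convCost_congr_s11 hk.1 fun l hl => h l (hl.trans hk.2)

lemma matchingPrefixCost_one {a : ℕ → ℕ} (ha : 1 ≤ a 1) :
    matchingPrefixCost sub τq τd 1 a = dtwA sub τq τd 1 (a 1) := by
  obtain ⟨b, hb⟩ := Nat.exists_eq_add_of_le' ha
  rw [dtwA_one_left ha, matchingPrefixCost, totalCost, Icc_self, sum_singleton, convCost,
    if_pos rfl, hb, Nat.add_sub_cancel, sum_Icc_succ_top (by omega)]

lemma matchingPrefixCost_succ (a : ℕ → ℕ) (hi : 1 ≤ i) :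
    matchingPrefixCost sub τq τd (i + 1) a =
      matchingPrefixCost sub τq τd i a + dtwStepCost sub τq τd (i + 1) (a i) (a (i + 1)) := by
  rw [matchingPrefixCost, matchingPrefixCost, totalCost, totalCost, sum_Icc_succ_top (by omega),
    convCost, if_neg (by omega), Nat.add_sub_cancel, add_assoc]
  rfl

lemma matchingPrefixCost_extend (a : ℕ → ℕ) (hi : 1 ≤ i) (j : ℕ) :
    matchingPrefixCost sub τq τd (i + 1) (fun k => if k ≤ i then a k else j) =
      matchingPrefixCost sub τq τd i a + dtwStepCost sub τq τd (i + 1) (a i) j := by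
  rw [matchingPrefixCost_succ _ hi, matchingPrefixCost_congr hi fun k hk => if_pos hk]
  simp

lemma dtwA_le_matchingPrefixCost {n : ℕ} {a : ℕ → ℕ} (hi : 1 ≤ i) (ha : IsMatchingOn i 1 n a) :
    dtwA sub τq τd i (a i) ≤ matchingPrefixCost sub τq τd i a := by
  induction i, hi using Nat.le_induction with
  | base => exact (matchingPrefixCost_one (ha.1 1 le_rfl le_rfl).1).ge
  | succ i hi ih =>
    rw [matchingPrefixCost_succ a hi]
    calc dtwA sub τq τd (i + 1) (a (i + 1))
        ≤ dtwA sub τq τd i (a i) + dtwStepCost sub τq τd (i + 1) (a i) (a (i + 1)) :=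
          dtwA_succ_le_add_dtwStepCost hi (ha.1 i hi (by omega)).1
            (ha.2 i (i + 1) hi (by omega) le_rfl)
      _ ≤ _ := by gcongr; exact ih (ha.of_le (by omega))

lemma dtwA_le_matchingCost {m n : ℕ} {a : ℕ → ℕ} (hm : 1 ≤ m) (ha : IsMatchingOn m 1 n a) :
    dtwA sub τq τd m n ≤ matchingCost sub τq τd m n a :=
  (dtwA_le_add_sum hm (ha.1 m hm le_rfl).1 (ha.1 m hm le_rfl).2).trans
    (add_le_add (dtwA_le_matchingPrefixCost hm ha) le_rfl)

lemma exists_matching_extend {k : ℕ} {a : ℕ → ℕ} (hi : 1 ≤ i) (ha : IsMatchingOn i 1 k a)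
    (hkj : k ≤ j) :
    ∃ b, IsMatchingOn (i + 1) 1 j b ∧ b (i + 1) = j ∧
      matchingPrefixCost sub τq τd (i + 1) b =
        matchingPrefixCost sub τq τd i a + dtwStepCost sub τq τd (i + 1) (a i) j :=
  ⟨_, ha.extend ((ha.1 1 le_rfl hi).1.trans ((ha.1 1 le_rfl hi).2.trans hkj)) hkj,
    if_neg (by omega), matchingPrefixCost_extend a hi j⟩

lemma exists_matchingPrefixCost_le_dtwA (hsub : ∀ p q, 0 ≤ sub p q) (hi : 1 ≤ i) (hj : 1 ≤ j) :
    ∃ a, IsMatchingOn i 1 j a ∧ a i = j ∧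
      matchingPrefixCost sub τq τd i a ≤ dtwA sub τq τd i j := by
  induction i, hi using Nat.le_induction generalizing j with
  | base =>
    exact ⟨fun _ => j, ⟨fun _ _ _ => ⟨hj, le_rfl⟩, fun _ _ _ _ _ => le_rfl⟩, rfl,
      (matchingPrefixCost_one hj).le⟩
  | succ i hi ih =>
    induction j, hj using Nat.le_induction with
    | base =>
      obtain ⟨a, ha, hai, hcost⟩ := ih le_rfl
      obtain ⟨b, hb, hbi, hbcost⟩ := exists_matching_extend hi ha le_rfl
      refine ⟨b, hb, hbi, ?_⟩
      rw [hbcost, hai, dtwStepCost_self, dtwA_succ_one hi]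
      exact add_le_add hcost le_rfl
    | succ j hj ihj =>
      rw [dtwA_succ_succ hi hj]
      let Realised (c : ℝ) : Prop := ∃ a, IsMatchingOn (i + 1) 1 (j + 1) a ∧ a (i + 1) = j + 1 ∧
        matchingPrefixCost sub τq τd (i + 1) a ≤ c + sub (τq (i + 1)) (τd (j + 1))
      refine min_rec' Realised (min_rec' Realised ?_ ?_) ?_
      · obtain ⟨a, ha, hai, hcost⟩ := ih (j := j + 1) (by omega)
        obtain ⟨b, hb, hbi, hbcost⟩ := exists_matching_extend hi ha le_rfl
        refine ⟨b, hb, hbi, ?_⟩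
        rw [hbcost, hai, dtwStepCost_self]
        exact add_le_add hcost le_rfl
      · -- move the last matched index of the optimal matching for `(i + 1, j)` to `j + 1`
        obtain ⟨a, ha, hai, hcost⟩ := ihj
        have ha' := ha.of_le (Nat.le_succ i)
        obtain ⟨b, hb, hbi, hbcost⟩ := exists_matching_extend hi ha' (Nat.le_succ j)
        refine ⟨b, hb, hbi, ?_⟩
        have hstep := dtwStepCost_succ_le (τq := τq) (τd := τd) (i := i + 1) hsub
          (ha'.1 i hi le_rfl).2
        rw [matchingPrefixCost_succ a hi, hai] at hcost
        linarith
      · obtain ⟨a, ha, hai, hcost⟩ := ih hj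
        obtain ⟨b, hb, hbi, hbcost⟩ := exists_matching_extend hi ha (Nat.le_succ j)
        refine ⟨b, hb, hbi, ?_⟩
        rw [hbcost, hai, dtwStepCost_succ]
        exact add_le_add hcost le_rfl

theorem isLeast_matchingCost (hsub : ∀ p q, 0 ≤ sub p q) {m n : ℕ} (hm : 1 ≤ m) (hn : 1 ≤ n) :
    IsLeast {v | ∃ a, IsMatchingOn m 1 n a ∧ v = matchingCost sub τq τd m n a}
      (dtwA sub τq τd m n) := by
  refine ⟨?_, fun v ⟨a, ha, hv⟩ => hv ▸ dtwA_le_matchingCost hm ha⟩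
  obtain ⟨a, ha, ham, hcost⟩ := exists_matchingPrefixCost_le_dtwA (τq := τq) (τd := τd) hsub hm hn
  have htail : matchingCost sub τq τd m n a = matchingPrefixCost sub τq τd m a := by
    simp [matchingCost, ham]
  exact ⟨a, ha, le_antisymm (dtwA_le_matchingCost hm ha) (htail ▸ hcost)⟩

end DTWMatching

/-- `dtw(τq, τd)` equals the minimum, over all matching sequences
`a : {1,…,m} → {1,…,n}`, of `Σ_{k=1}^{a(1)−1} sub(τq[1],τd[k]) + Σ_{i=1}^{m} Cost(i,a) +
Σ_{k=a(m)+1}^{n} sub(τq[m],τd[k])`, where `Cost` uses the DTW conversion costs. -/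
theorem dtw_eq_min_matching_cost {P : Type*}
    (m n : ℕ) (hm : 1 ≤ m) (hn : 1 ≤ n)
    (τq τd : ℕ → P) (sub : P → P → ℝ) (hsub : ∀ p q, 0 ≤ sub p q) :
    dtwA sub τq τd m n =
      sInf {v : ℝ | ∃ a : ℕ → ℕ, IsMatchingOn m 1 n a ∧
        v = (∑ k ∈ Finset.Icc 1 (a 1 - 1), sub (τq 1) (τd k)) +
            totalCost (fun i j => sub (τq i) (τd j)) (fun i j => sub (τq i) (τd j))
              (fun i k j => sInf {w : ℝ | ∃ t : ℕ, k ≤ t ∧ t ≤ j - 1 ∧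
                w = (∑ p ∈ Finset.Icc (k + 1) t, sub (τq (i - 1)) (τd p)) +
                    ∑ p ∈ Finset.Icc (t + 1) j, sub (τq i) (τd p)})
              m a +
            ∑ k ∈ Finset.Icc (a m + 1) n, sub (τq m) (τd k)} :=
  (isLeast_matchingCost hsub hm hn).csInf_eq.symm
end

section
/- There exists a warping path between τq and τd of minimum cost such that for every pair (i,j) on the path, it is not the case that both the index i occurs in more than one pair of the path and the index j occurs in more than one pair of the path. -/
/-- `p 1, …, p L` is a warping path between a trajectory of length `m` and a trajectory of
length `n`: it starts at `(1,1)`, ends at `(m,n)`, and each step increases the first index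
by one, the second index by one, or both. -/
def IsWarpingPath (m n L : ℕ) (p : ℕ → ℕ × ℕ) : Prop :=
  1 ≤ L ∧ p 1 = (1, 1) ∧ p L = (m, n) ∧
  ∀ t, 1 ≤ t → t < L →
    p (t + 1) = ((p t).1 + 1, (p t).2) ∨
    p (t + 1) = ((p t).1, (p t).2 + 1) ∨
    p (t + 1) = ((p t).1 + 1, (p t).2 + 1)

/-- The cost `Σ_{t=1}^{L} sub(τq[i_t], τd[j_t])` of a warping path. -/
noncomputable def warpCost {P : Type*} (sub : P → P → ℝ) (τq τd : ℕ → P)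
    (L : ℕ) (p : ℕ → ℕ × ℕ) : ℝ :=
  ∑ t ∈ Finset.Icc 1 L, sub (τq (p t).1) (τd (p t).2)

lemma wp_step {m n L : ℕ} {p : ℕ → ℕ × ℕ} (h : IsWarpingPath m n L p)
    {t : ℕ} (h1 : 1 ≤ t) (h2 : t < L) :
    (p t).1 ≤ (p (t+1)).1 ∧ (p (t+1)).1 ≤ (p t).1 + 1 ∧
    (p t).2 ≤ (p (t+1)).2 ∧ (p (t+1)).2 ≤ (p t).2 + 1 ∧
    (p t).1 + (p t).2 + 1 ≤ (p (t+1)).1 + (p (t+1)).2 := by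
  rcases h.2.2.2 t h1 h2 with h' | h' | h' <;> rw [h'] <;> simp <;> omega

lemma wp_mono {m n L : ℕ} {p : ℕ → ℕ × ℕ} (h : IsWarpingPath m n L p) :
    ∀ t, t ≤ L → ∀ s, 1 ≤ s → s ≤ t →
      (p s).1 ≤ (p t).1 ∧ (p s).2 ≤ (p t).2 ∧
      (p s).1 + (p s).2 + (t - s) ≤ (p t).1 + (p t).2 := by
  intro t
  induction t with
  | zero => intro _ s hs hst; omega
  | succ t ih =>
    intro htL s hs hst
    rcases Nat.lt_or_ge s (t+1) with hlt | hge
    · have ih' := ih (by omega) s hs (by omega)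
      have hstep := wp_step h (show 1 ≤ t by omega) (show t < L by omega)
      exact ⟨by omega, by omega, by omega⟩
    · have hst' : s = t + 1 := by omega
      subst hst'
      exact ⟨le_rfl, le_rfl, by omega⟩

lemma wp_bounds {m n L : ℕ} {p : ℕ → ℕ × ℕ} (h : IsWarpingPath m n L p)
    {t : ℕ} (h1 : 1 ≤ t) (h2 : t ≤ L) :
    1 ≤ (p t).1 ∧ (p t).1 ≤ m ∧ 1 ≤ (p t).2 ∧ (p t).2 ≤ n ∧
    t + 1 ≤ (p t).1 + (p t).2 := by
  have hmono1 := wp_mono h t h2 1 le_rfl h1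
  have hmono2 := wp_mono h L le_rfl t h1 h2
  rw [h.2.1] at hmono1
  rw [h.2.2.1] at hmono2
  simp at hmono1 hmono2
  omega

lemma wp_len {m n L : ℕ} {p : ℕ → ℕ × ℕ} (h : IsWarpingPath m n L p) :
    L + 1 ≤ m + n := by
  have := wp_bounds h h.1 (le_refl L)
  rw [h.2.2.1] at this
  simp at this
  omega

lemma wp_nbr1 {m n L : ℕ} {p : ℕ → ℕ × ℕ} (h : IsWarpingPath m n L p) {t t₁ : ℕ}
    (ht1 : 1 ≤ t) (htL : t ≤ L) (h1 : 1 ≤ t₁) (h2 : t₁ ≤ L) (hne : t₁ ≠ t)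
    (heq : (p t₁).1 = (p t).1) :
    (2 ≤ t ∧ (p (t-1)).1 = (p t).1) ∨ (t < L ∧ (p (t+1)).1 = (p t).1) := by
  rcases Nat.lt_or_ge t₁ t with hlt | hge
  · left
    have ha := wp_mono h (t-1) (by omega) t₁ h1 (by omega)
    have hb := wp_mono h t htL (t-1) (by omega) (by omega)
    exact ⟨by omega, by omega⟩
  · right
    have ha := wp_mono h t₁ h2 (t+1) (by omega) (by omega)
    have hb := wp_mono h (t+1) (by omega) t ht1 (by omega)
    exact ⟨by omega, by omega⟩

lemma wp_nbr2 {m n L : ℕ} {p : ℕ → ℕ × ℕ} (h : IsWarpingPath m n L p) {t t₂ : ℕ}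
    (ht1 : 1 ≤ t) (htL : t ≤ L) (h1 : 1 ≤ t₂) (h2 : t₂ ≤ L) (hne : t₂ ≠ t)
    (heq : (p t₂).2 = (p t).2) :
    (2 ≤ t ∧ (p (t-1)).2 = (p t).2) ∨ (t < L ∧ (p (t+1)).2 = (p t).2) := by
  rcases Nat.lt_or_ge t₂ t with hlt | hge
  · left
    have ha := wp_mono h (t-1) (by omega) t₂ h1 (by omega)
    have hb := wp_mono h t htL (t-1) (by omega) (by omega)
    exact ⟨by omega, by omega⟩
  · right
    have ha := wp_mono h t₂ h2 (t+1) (by omega) (by omega)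
    have hb := wp_mono h (t+1) (by omega) t ht1 (by omega)
    exact ⟨by omega, by omega⟩

lemma wp_middle {m n L : ℕ} {p : ℕ → ℕ × ℕ} (h : IsWarpingPath m n L p) {t : ℕ}
    (ht1 : 1 ≤ t) (htL : t ≤ L)
    (hA : ∃ t₁, 1 ≤ t₁ ∧ t₁ ≤ L ∧ t₁ ≠ t ∧ (p t₁).1 = (p t).1)
    (hB : ∃ t₂, 1 ≤ t₂ ∧ t₂ ≤ L ∧ t₂ ≠ t ∧ (p t₂).2 = (p t).2) :
    2 ≤ t ∧ t < L ∧ p (t+1) = ((p (t-1)).1 + 1, (p (t-1)).2 + 1) := by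
  obtain ⟨t₁, a1, a2, a3, a4⟩ := hA
  obtain ⟨t₂, b1, b2, b3, b4⟩ := hB
  have H1 := wp_nbr1 h ht1 htL a1 a2 a3 a4
  have H2 := wp_nbr2 h ht1 htL b1 b2 b3 b4
  rcases H1 with ⟨h2t, e1⟩ | ⟨hlt, e1⟩ <;> rcases H2 with ⟨h2t', e2⟩ | ⟨hlt', e2⟩
  · exfalso
    have hstep := h.2.2.2 (t-1) (by omega) (by omega)
    rw [show t - 1 + 1 = t from by omega] at hstep
    rcases hstep with h' | h' | h' <;> rw [h'] at e1 e2 <;> simp at e1 e2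
  · refine ⟨h2t, hlt', ?_⟩
    have hstep1 := h.2.2.2 (t-1) (by omega) (by omega)
    rw [show t - 1 + 1 = t from by omega] at hstep1
    have hstep2 := h.2.2.2 t ht1 hlt'
    have hpt : p t = ((p (t-1)).1, (p (t-1)).2 + 1) := by
      rcases hstep1 with h' | h' | h'
      · exfalso; rw [h'] at e1; simp at e1
      · exact h'
      · exfalso; rw [h'] at e1; simp at e1
    have hpt1 : p (t+1) = ((p t).1 + 1, (p t).2) := by
      rcases hstep2 with h' | h' | h'
      · exact h'
      · exfalso; rw [h'] at e2; simp at e2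
      · exfalso; rw [h'] at e2; simp at e2
    rw [hpt1, hpt]
  · refine ⟨h2t', hlt, ?_⟩
    have hstep1 := h.2.2.2 (t-1) (by omega) (by omega)
    rw [show t - 1 + 1 = t from by omega] at hstep1
    have hstep2 := h.2.2.2 t ht1 hlt
    have hpt : p t = ((p (t-1)).1 + 1, (p (t-1)).2) := by
      rcases hstep1 with h' | h' | h'
      · exact h'
      · exfalso; rw [h'] at e2; simp at e2
      · exfalso; rw [h'] at e2; simp at e2
    have hpt1 : p (t+1) = ((p t).1, (p t).2 + 1) := by
      rcases hstep2 with h' | h' | h'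
      · exfalso; rw [h'] at e1; simp at e1
      · exact h'
      · exfalso; rw [h'] at e1; simp at e1
    rw [hpt1, hpt]
  · exfalso
    have hstep := h.2.2.2 t ht1 hlt
    rcases hstep with h' | h' | h' <;> rw [h'] at e1 e2 <;> simp at e1 e2

lemma sum_Icc_split (f : ℕ → ℝ) {t L : ℕ} (h1 : 1 ≤ t) (h2 : t ≤ L) :
    ∑ s ∈ Finset.Icc 1 L, f s
      = (∑ s ∈ Finset.Icc 1 (t-1), f s) + f t + ∑ s ∈ Finset.Icc (t+1) L, f s := by
  have e1 : Finset.Icc 1 L = Finset.Ioc 0 L := by rw [← Finset.Icc_add_one_left_eq_Ioc, zero_add]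
  have e2 : Finset.Icc 1 (t-1) = Finset.Ioc 0 (t-1) := by rw [← Finset.Icc_add_one_left_eq_Ioc, zero_add]
  have e3 : Finset.Icc (t+1) L = Finset.Ioc t L := by rw [← Finset.Icc_add_one_left_eq_Ioc]
  rw [e1, e2, e3]
  rw [← Finset.sum_Ioc_consecutive f (show (0:ℕ) ≤ t - 1 by omega) (show t - 1 ≤ L by omega)]
  rw [← Finset.sum_Ioc_consecutive f (show t - 1 ≤ t by omega) (show t ≤ L by omega)]
  have e4 : Finset.Ioc (t-1) t = {t} := by
    rw [← Finset.Icc_add_one_left_eq_Ioc, show t - 1 + 1 = t from by omega, Finset.Icc_self]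
  rw [e4, Finset.sum_singleton]
  ring

lemma sum_Icc_shift (f : ℕ → ℝ) (a b : ℕ) :
    ∑ s ∈ Finset.Icc (a+1) (b+1), f s = ∑ s ∈ Finset.Icc a b, f (s+1) := by
  rw [← Finset.map_add_right_Icc a b 1, Finset.sum_map]
  rfl

lemma wp_thin {P : Type*} (m n : ℕ) (τq τd : ℕ → P) (sub : P → P → ℝ)
    (hsub : ∀ p q, 0 ≤ sub p q) :
    ∀ L : ℕ, ∀ p : ℕ → ℕ × ℕ, IsWarpingPath m n L p →
      ∃ (L' : ℕ) (p' : ℕ → ℕ × ℕ), IsWarpingPath m n L' p' ∧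
        warpCost sub τq τd L' p' ≤ warpCost sub τq τd L p ∧
        (∀ t, 1 ≤ t → t ≤ L' →
          ¬((∃ t₁, 1 ≤ t₁ ∧ t₁ ≤ L' ∧ t₁ ≠ t ∧ (p' t₁).1 = (p' t).1) ∧
            (∃ t₂, 1 ≤ t₂ ∧ t₂ ≤ L' ∧ t₂ ≠ t ∧ (p' t₂).2 = (p' t).2))) := by
  intro L
  induction L using Nat.strong_induction_on with
  | _ L ih =>
    intro p hp
    by_cases hthin : ∀ t, 1 ≤ t → t ≤ L →
        ¬((∃ t₁, 1 ≤ t₁ ∧ t₁ ≤ L ∧ t₁ ≠ t ∧ (p t₁).1 = (p t).1) ∧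
          (∃ t₂, 1 ≤ t₂ ∧ t₂ ≤ L ∧ t₂ ≠ t ∧ (p t₂).2 = (p t).2))
    · exact ⟨L, p, hp, le_rfl, hthin⟩
    · push_neg at hthin
      obtain ⟨t, ht1, htL, hAB⟩ := hthin
      obtain ⟨h2t, htlt, hdiag⟩ := wp_middle hp ht1 htL hAB.1 hAB.2
      set q : ℕ → ℕ × ℕ := fun s => if s < t then p s else p (s+1) with hqdef
      have hq1 : ∀ s, s < t → q s = p s := fun s hs => if_pos hs
      have hq2 : ∀ s, ¬ s < t → q s = p (s+1) := fun s hs => if_neg hs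
      have hq : IsWarpingPath m n (L-1) q := by
        refine ⟨by omega, ?_, ?_, ?_⟩
        · rw [hq1 1 (by omega)]; exact hp.2.1
        · rw [hq2 (L-1) (by omega), show L - 1 + 1 = L from by omega]; exact hp.2.2.1
        · intro s hs1 hs2
          by_cases hc1 : s + 1 < t
          · rw [hq1 s (by omega), hq1 (s+1) hc1]
            exact hp.2.2.2 s hs1 (by omega)
          · by_cases hc2 : s + 1 = t
            · rw [hq1 s (by omega), hq2 (s+1) (by omega)]
              right; right
              rw [show s + 1 + 1 = t + 1 from by omega, show s = t - 1 from by omega]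
              exact hdiag
            · rw [hq2 s (by omega), hq2 (s+1) (by omega)]
              exact hp.2.2.2 (s+1) (by omega) (by omega)
      have hcost : warpCost sub τq τd (L-1) q ≤ warpCost sub τq τd L p := by
        set g : ℕ → ℝ := fun s => sub (τq (p s).1) (τd (p s).2) with hgdef
        have hL : warpCost sub τq τd (L-1) q
            = (∑ s ∈ Finset.Icc 1 (t-1), g s) + g (t+1)
              + ∑ s ∈ Finset.Icc (t+2) L, g s := by
          unfold warpCost
          rw [sum_Icc_split _ ht1 (show t ≤ L - 1 from by omega)]
          congr 1
          · congr 1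
            · apply Finset.sum_congr rfl
              intro s hs
              rw [Finset.mem_Icc] at hs
              rw [hq1 s (by omega)]
            · rw [hq2 t (by omega)]
          · rw [show L = (L-1) + 1 from by omega, show t + 2 = (t+1) + 1 from by omega,
              sum_Icc_shift]
            apply Finset.sum_congr rfl
            intro s hs
            rw [Finset.mem_Icc] at hs
            rw [hq2 s (by omega)]
        have hR : warpCost sub τq τd L p
            = (∑ s ∈ Finset.Icc 1 (t-1), g s) + g t + g (t+1)
              + ∑ s ∈ Finset.Icc (t+2) L, g s := by
          unfold warpCost
          rw [sum_Icc_split _ (show 1 ≤ t + 1 from by omega) (show t + 1 ≤ L from by omega)]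
          rw [sum_Icc_split _ ht1 (show t ≤ t + 1 - 1 from by omega)]
          rw [show t + 1 - 1 = t from by omega]
          rw [Finset.Icc_eq_empty (show ¬ t + 1 ≤ t from by omega), Finset.sum_empty]
          ring
        rw [hL, hR]
        have := hsub (τq (p t).1) (τd (p t).2)
        simp only [hgdef]
        linarith
      obtain ⟨L', p', h1, h2, h3⟩ := ih (L-1) (by omega) q hq
      exact ⟨L', p', h1, le_trans h2 hcost, h3⟩

lemma wp_exists (m n : ℕ) (hm : 1 ≤ m) (hn : 1 ≤ n) :
    ∃ (L : ℕ) (p : ℕ → ℕ × ℕ), IsWarpingPath m n L p := by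
  set p0 : ℕ → ℕ × ℕ := fun t => if t ≤ m then (t, 1) else (m, t - m + 1) with hp0
  have e1 : ∀ t, t ≤ m → p0 t = (t, 1) := fun t ht => if_pos ht
  have e2 : ∀ t, ¬ t ≤ m → p0 t = (m, t - m + 1) := fun t ht => if_neg ht
  refine ⟨m + n - 1, p0, by omega, ?_, ?_, ?_⟩
  · rw [e1 1 hm]
  · by_cases hc : m + n - 1 ≤ m
    · rw [e1 _ hc, Prod.ext_iff]
      constructor <;> simp <;> omega
    · rw [e2 _ hc, Prod.ext_iff]
      constructor <;> simp; omega
  · intro t ht1 htL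
    by_cases hc : t + 1 ≤ m
    · left
      rw [e1 _ hc, e1 _ (by omega), Prod.ext_iff]
      constructor <;> simp
    · by_cases hc2 : t ≤ m
      · right; left
        rw [e2 _ hc, e1 _ hc2, Prod.ext_iff]
        constructor <;> simp <;> omega
      · right; left
        rw [e2 _ hc, e2 _ hc2, Prod.ext_iff]
        constructor <;> simp; omega

lemma cost_finite {P : Type*} (m n : ℕ) (τq τd : ℕ → P) (sub : P → P → ℝ) :
    {c : ℝ | ∃ (L : ℕ) (p : ℕ → ℕ × ℕ),
      IsWarpingPath m n L p ∧ warpCost sub τq τd L p = c}.Finite := by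
  set G : Fin (m+n+1) × (Fin (m+n+1) → Fin (m+1) × Fin (n+1)) → ℝ :=
    fun x => ∑ t ∈ Finset.Icc 1 (x.1 : ℕ),
      sub (τq ((x.2 ⟨t % (m+n+1), Nat.mod_lt t (by omega)⟩).1 : ℕ))
          (τd ((x.2 ⟨t % (m+n+1), Nat.mod_lt t (by omega)⟩).2 : ℕ)) with hGdef
  apply Set.Finite.subset (Set.finite_range G)
  rintro c ⟨L, p, h, rfl⟩
  have hLmn := wp_len h
  refine ⟨(⟨L, by omega⟩, fun t => (⟨min (p t.val).1 m, by omega⟩, ⟨min (p t.val).2 n, by omega⟩)), ?_⟩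
  simp only [hGdef]
  unfold warpCost
  apply Finset.sum_congr rfl
  intro s hs
  rw [Finset.mem_Icc] at hs
  have hb := wp_bounds h hs.1 hs.2
  have hmod : s % (m+n+1) = s := Nat.mod_eq_of_lt (by omega)
  simp only [hmod]
  rw [min_eq_left hb.2.1, min_eq_left hb.2.2.2.1]


/-- There exists a warping path between `τq` and `τd` of minimum cost
such that for every pair `(i,j)` on the path, it is not the case that both the index `i`
occurs in more than one pair of the path and the index `j` occurs in more than one pair
of the path. -/
theorem exists_min_warping_path_no_double_multipoint {P : Type*}
    (m n : ℕ) (hm : 1 ≤ m) (hn : 1 ≤ n)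
    (τq τd : ℕ → P) (sub : P → P → ℝ) (hsub : ∀ p q, 0 ≤ sub p q) :
    ∃ (L : ℕ) (p : ℕ → ℕ × ℕ), IsWarpingPath m n L p ∧
      (∀ (L' : ℕ) (p' : ℕ → ℕ × ℕ), IsWarpingPath m n L' p' →
        warpCost sub τq τd L p ≤ warpCost sub τq τd L' p') ∧
      (∀ t, 1 ≤ t → t ≤ L →
        ¬((∃ t₁, 1 ≤ t₁ ∧ t₁ ≤ L ∧ t₁ ≠ t ∧ (p t₁).1 = (p t).1) ∧
          (∃ t₂, 1 ≤ t₂ ∧ t₂ ≤ L ∧ t₂ ≠ t ∧ (p t₂).2 = (p t).2))) := by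
  set C : Set ℝ := {c : ℝ | ∃ (L : ℕ) (p : ℕ → ℕ × ℕ),
      IsWarpingPath m n L p ∧ warpCost sub τq τd L p = c} with hC
  have hfin : C.Finite := cost_finite m n τq τd sub
  have hne : C.Nonempty := by
    obtain ⟨L, p, h⟩ := wp_exists m n hm hn
    exact ⟨warpCost sub τq τd L p, L, p, h, rfl⟩
  have hne' : hfin.toFinset.Nonempty := by
    rwa [Set.Finite.toFinset_nonempty]
  set c := hfin.toFinset.min' hne' with hc
  have hc_mem : c ∈ C := by
    have := hfin.toFinset.min'_mem hne'
    rwa [Set.Finite.mem_toFinset] at this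
  have hc_min : ∀ c' ∈ C, c ≤ c' := by
    intro c' hc'
    exact hfin.toFinset.min'_le c' (by rwa [Set.Finite.mem_toFinset])
  obtain ⟨L₀, p₀, h₀, hcost₀⟩ := hc_mem
  obtain ⟨L, p, hwp, hle, hthin⟩ := wp_thin m n τq τd sub hsub L₀ p₀ h₀
  refine ⟨L, p, hwp, ?_, hthin⟩
  intro L' p' h'
  have h1 : c ≤ warpCost sub τq τd L' p' := hc_min _ ⟨L', p', h', rfl⟩
  linarith [hle, hcost₀.le, hcost₀.ge]
end

section
/- Σ_{i=1}^{m} min{ del(τq[i]), min over 1 ≤ j ≤ n of sub(τq[i],τd[j]) } ≤ min over 1 ≤ j ≤ n of C(m,j). -/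
/-- The optimal partial matching-conversion cost `C(i,j)` for the WED conversion costs. -/
noncomputable def wedCpm {P : Type*} (τq τd : ℕ → P) (del ins : P → ℝ) (sub : P → P → ℝ)
    (n : ℕ) : ℕ → ℕ → ℝ :=
  Cpm (fun i _ => del (τq i)) (fun i j => sub (τq i) (τd j))
    (fun i k j => (∑ t ∈ Finset.Icc (k + 1) (j - 1), ins (τd t)) + sub (τq i) (τd j)) n

/-- The lower bound
`Σ_{i=1}^{m} min{ del(τq[i]), min_{1 ≤ j ≤ n} sub(τq[i],τd[j]) } ≤ min_{1 ≤ j ≤ n} C(m,j)`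
holds for the WED partial cost `C`. -/
theorem minCost_lower_bound {P : Type*}
    (m n : ℕ) (hm : 1 ≤ m) (hn : 1 ≤ n)
    (τq τd : ℕ → P) (del ins : P → ℝ) (sub : P → P → ℝ)
    (hdel : ∀ p, 0 ≤ del p) (hins : ∀ q, 0 ≤ ins q) (hsub : ∀ p q, 0 ≤ sub p q) :
    (∑ i ∈ Finset.Icc 1 m,
        min (del (τq i))
          (sInf {v : ℝ | ∃ j : ℕ, 1 ≤ j ∧ j ≤ n ∧ v = sub (τq i) (τd j)})) ≤
      sInf {v : ℝ | ∃ j : ℕ, 1 ≤ j ∧ j ≤ n ∧ v = wedCpm τq τd del ins sub n m j} := by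
  set CD : ℕ → ℕ → ℝ := fun i _ => del (τq i) with hCD
  set CS : ℕ → ℕ → ℝ := fun i j => sub (τq i) (τd j) with hCS
  set CI : ℕ → ℕ → ℕ → ℝ :=
    fun i k j => (∑ t ∈ Finset.Icc (k + 1) (j - 1), ins (τd t)) + sub (τq i) (τd j) with hCI
  set S : ℕ → Set ℝ := fun i => {v : ℝ | ∃ j : ℕ, 1 ≤ j ∧ j ≤ n ∧ v = sub (τq i) (τd j)}
    with hSdef
  have hSbdd : ∀ i, BddBelow (S i) := by
    intro i
    exact ⟨0, by rintro v ⟨j, _, _, rfl⟩; exact hsub _ _⟩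
  have hSle : ∀ i j, 1 ≤ j → j ≤ n → sInf (S i) ≤ sub (τq i) (τd j) := by
    intro i j h1 h2
    exact csInf_le (hSbdd i) ⟨j, h1, h2, rfl⟩
  -- key per-term bound
  have hkey : ∀ (a : ℕ → ℕ), IsMatchingOn m 1 n a → ∀ k ∈ Finset.Icc 1 m,
      min (del (τq k)) (sInf (S k)) ≤ convCost CD CS CI a k := by
    intro a ⟨hbnd, _⟩ k hk
    simp only [Finset.mem_Icc] at hk
    obtain ⟨hak1, hakn⟩ := hbnd k hk.1 hk.2
    unfold convCost
    by_cases h1 : k = 1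
    · simp only [h1, if_pos rfl]
      have := hbnd 1 le_rfl (h1 ▸ hk.2)
      exact le_trans (min_le_right _ _) (h1 ▸ hSle 1 (a 1) this.1 this.2)
    · rw [if_neg h1]
      by_cases h2 : a (k - 1) = a k
      · rw [if_pos h2]
        exact min_le_left _ _
      · rw [if_neg h2]
        by_cases h3 : a (k - 1) = a k - 1
        · rw [if_pos h3]
          exact le_trans (min_le_right _ _) (hSle k (a k) hak1 hakn)
        · rw [if_neg h3]
          have hsum : (0:ℝ) ≤ ∑ t ∈ Finset.Icc (a (k-1) + 1) (a k - 1), ins (τd t) :=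
            Finset.sum_nonneg fun t _ => hins _
          calc min (del (τq k)) (sInf (S k)) ≤ sub (τq k) (τd (a k)) :=
                le_trans (min_le_right _ _) (hSle k (a k) hak1 hakn)
            _ ≤ CI k (a (k-1)) (a k) := by
                simp only [hCI]; linarith
  -- total bound
  have htot : ∀ (a : ℕ → ℕ), IsMatchingOn m 1 n a →
      (∑ i ∈ Finset.Icc 1 m, min (del (τq i)) (sInf (S i))) ≤ totalCost CD CS CI m a := by
    intro a ha
    exact Finset.sum_le_sum (hkey a ha)
  -- existence of a matching with a m = j
  have hwit : ∀ j, 1 ≤ j → j ≤ n →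
      ∃ a : ℕ → ℕ, IsMatchingOn m 1 n a ∧ a m = j := by
    intro j h1 h2
    refine ⟨fun i => if i = m then j else 1, ⟨?_, ?_⟩, if_pos rfl⟩
    · intro i hi1 hi2
      by_cases h : i = m <;> simp [h, h1, h2, hn]
    · intro i j' hi1 hij hj'm
      by_cases hj' : j' = m
      · by_cases hi : i = m <;> simp [hi, hj', h1]
      · have hi : i ≠ m := fun h => hj' (le_antisymm hj'm (h ▸ hij))
        simp [hi, hj']
  -- bound each wedCpm
  have hCle : ∀ j, 1 ≤ j → j ≤ n →
      (∑ i ∈ Finset.Icc 1 m, min (del (τq i)) (sInf (S i))) ≤ wedCpm τq τd del ins sub n m j := by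
    intro j h1 h2
    obtain ⟨a, ha, ham⟩ := hwit j h1 h2
    unfold wedCpm Cpm
    refine le_csInf ⟨totalCost CD CS CI m a, ?_⟩ ?_
    · exact ⟨a, ha, ham, rfl⟩
    · rintro v ⟨a', ha', _, rfl⟩
      exact htot a' ha'
  apply le_csInf
  · obtain ⟨j, h1, h2⟩ : ∃ j, 1 ≤ j ∧ j ≤ n := ⟨1, le_rfl, hn⟩
    exact ⟨_, j, h1, h2, rfl⟩
  · rintro v ⟨j, h1, h2, rfl⟩
    exact hCle j h1 h2
end

section
/- Define the array Ed(i,j) for 1 ≤ i ≤ m, 1 ≤ j ≤ n by Ed(1,j) = sub_ε(τq[1],τd[j]); Ed(i,1) = min{ Ed(i−1,1) + 1, sub_ε(τq[i],τd[1]) + (i−1) } for i > 1; and Ed(i,j) = min{ Ed(i−1,j) + 1, Ed(i,j−1) + 1 − sub_ε(τq[i],τd[j−1]) + sub_ε(τq[i],τd[j]), Ed(i−1,j−1) + sub_ε(τq[i],τd[j]) } for i > 1 and j > 1. Then the minimum over 1 ≤ j ≤ n of Ed(m,j) equals the minimum over all 1 ≤ i ≤ j ≤ n of edr(τq, τd[i:j]).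 -/
/-- The EDR matching cost `sub_ε(p,q)`: `0` if `dist p q ≤ ε`, and `1` otherwise. -/
noncomputable def subEps {P : Type*} [MetricSpace P] (ε : ℝ) (p q : P) : ℝ :=
  if dist p q ≤ ε then 0 else 1

/-- The EDR distance `edr(σ[1:i], ρ[1:j])` with threshold `ε`: the WED recurrence with
insertion and deletion costs `1` and substitution cost `sub_ε`. -/
noncomputable def edrA {P : Type*} [MetricSpace P] (ε : ℝ) (σ ρ : ℕ → P) : ℕ → ℕ → ℝ :=
  wedA (fun _ => 1) (fun _ => 1) (subEps ε) σ ρ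

section Aux
variable {P : Type*} [MetricSpace P] (ε : ℝ) (σ ρ : ℕ → P)

lemma subEps_nonneg (p q : P) : 0 ≤ subEps ε p q := by
  unfold subEps; split <;> norm_num

lemma subEps_le_one (p q : P) : subEps ε p q ≤ 1 := by
  unfold subEps; split <;> norm_num

lemma edrA_zero_left (j : ℕ) : edrA ε σ ρ 0 j = j := by
  simp [edrA, wedA, Nat.card_Icc]

lemma edrA_zero_right (i : ℕ) : edrA ε σ ρ i 0 = i := by
  cases i <;> simp [edrA, wedA, Nat.card_Icc]

lemma edrA_succ (i j : ℕ) : edrA ε σ ρ (i+1) (j+1) =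
    min (min (edrA ε σ ρ i j + subEps ε (σ (i+1)) (ρ (j+1)))
      (edrA ε σ ρ (i+1) j + 1)) (edrA ε σ ρ i (j+1) + 1) := by
  simp [edrA, wedA]


lemma edrA_nonneg (i : ℕ) : ∀ j, 0 ≤ edrA ε σ ρ i j := by
  induction i with
  | zero => intro j; rw [edrA_zero_left]; positivity
  | succ i ih =>
    intro j
    induction j with
    | zero => rw [edrA_zero_right]; positivity
    | succ j ihj =>
      rw [edrA_succ]
      have h1 := ih j
      have h2 := ih (j+1)
      have h3 := subEps_nonneg ε (σ (i+1)) (ρ (j+1))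
      simp only [le_min_iff]
      refine ⟨⟨by linarith, by linarith⟩, by linarith⟩

lemma edrA_ins (i L : ℕ) : edrA ε σ ρ i (L+1) ≤ edrA ε σ ρ i L + 1 := by
  cases i with
  | zero => rw [edrA_zero_left, edrA_zero_left]; push_cast; linarith
  | succ i => rw [edrA_succ]; exact le_trans (min_le_left _ _) (min_le_right _ _)

lemma edrA_del (i L : ℕ) : edrA ε σ ρ (i+1) L ≤ edrA ε σ ρ i L + 1 := by
  cases L with
  | zero => rw [edrA_zero_right, edrA_zero_right]; push_cast; linarith
  | succ L => rw [edrA_succ]; exact min_le_right _ _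

end Aux

noncomputable def GF {P : Type*} [MetricSpace P] (ε : ℝ) (σ ρ : ℕ → P) : ℕ → ℕ → ℝ
  | 0, L => ((L - 1 : ℕ) : ℝ) + 2
  | (i+1), L => min (edrA ε σ ρ i (L - 1) + subEps ε (σ (i+1)) (ρ L))
      (GF ε σ ρ i L + 1)

section Aux2
variable {P : Type*} [MetricSpace P] (ε : ℝ) (σ ρ : ℕ → P)

lemma GF_zero (L : ℕ) : GF ε σ ρ 0 L = ((L - 1 : ℕ) : ℝ) + 2 := by simp [GF]

lemma GF_succ (i L : ℕ) : GF ε σ ρ (i+1) L =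
    min (edrA ε σ ρ i (L - 1) + subEps ε (σ (i+1)) (ρ L)) (GF ε σ ρ i L + 1) := by
  simp [GF]

lemma GF_succ' (τd : ℕ → P) (i L s : ℕ) :
    GF ε σ (fun t => τd (s + t - 1)) (i+1) L =
    min (edrA ε σ (fun t => τd (s + t - 1)) i (L - 1) + subEps ε (σ (i+1)) (τd (s + L - 1)))
      (GF ε σ (fun t => τd (s + t - 1)) i L + 1) := by
  rw [GF_succ]

lemma edrA_le_GF (i L : ℕ) : edrA ε σ ρ (i+1) (L+1) ≤ GF ε σ ρ (i+1) (L+1) := by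
  induction i with
  | zero =>
    rw [GF_succ, GF_zero]
    simp only [Nat.add_sub_cancel]
    refine le_min ?_ ?_
    · rw [edrA_succ]
      exact le_trans (min_le_left _ _) (min_le_left _ _)
    · have h := edrA_del ε σ ρ 0 (L+1)
      rw [edrA_zero_left] at h
      push_cast
      push_cast at h
      linarith
  | succ i ih =>
    rw [GF_succ]
    simp only [Nat.add_sub_cancel]
    refine le_min ?_ ?_
    · rw [edrA_succ]
      exact le_trans (min_le_left _ _) (min_le_left _ _)
    · exact le_trans (edrA_del ε σ ρ (i+1) (L+1)) (by linarith [ih])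

lemma edrA_decomp (i L : ℕ) : edrA ε σ ρ (i+1) (L+1) =
    min (GF ε σ ρ (i+1) (L+1)) (edrA ε σ ρ (i+1) L + 1) := by
  induction i with
  | zero =>
    rw [edrA_succ, GF_succ, GF_zero]
    simp only [edrA_zero_left]
    simp only [Nat.add_sub_cancel]
    have h1 : edrA ε σ ρ 1 L ≤ (L : ℝ) + 1 := by
      have h := edrA_del ε σ ρ 0 L
      rw [edrA_zero_left] at h; exact h
    have h2 := subEps_nonneg ε (σ 1) (ρ (L+1))
    have h3 := subEps_le_one ε (σ 1) (ρ (L+1))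
    push_cast
    simp only [min_def]; split_ifs <;> linarith
  | succ i ih =>
    rw [edrA_succ, GF_succ]
    simp only [Nat.add_sub_cancel]
    rw [ih]
    have h2 := subEps_nonneg ε (σ (i+1+1)) (ρ (L+1))
    have h3 := subEps_le_one ε (σ (i+1+1)) (ρ (L+1))
    simp only [min_def]; split_ifs <;> linarith

end Aux2

section Main
variable {P : Type*} [MetricSpace P]
    (m n : ℕ) (τq τd : ℕ → P) (ε : ℝ) (Ed : ℕ → ℕ → ℝ)

/-- Upper bound `Ed i j ≤ i`. -/
lemma EdU
    (hEd1 : ∀ j, 1 ≤ j → j ≤ n → Ed 1 j = subEps ε (τq 1) (τd j))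
    (hEdi1 : ∀ i, 1 < i → i ≤ m →
      Ed i 1 = min (Ed (i - 1) 1 + 1) (subEps ε (τq i) (τd 1) + ((i : ℝ) - 1)))
    (hEdij : ∀ i j, 1 < i → i ≤ m → 1 < j → j ≤ n →
      Ed i j = min (min (Ed (i - 1) j + 1)
          (Ed i (j - 1) + 1 - subEps ε (τq i) (τd (j - 1)) + subEps ε (τq i) (τd j)))
        (Ed (i - 1) (j - 1) + subEps ε (τq i) (τd j))) :
    ∀ i j, 1 ≤ i → i ≤ m → 1 ≤ j → j ≤ n → Ed i j ≤ i := by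
  intro i
  induction i using Nat.strong_induction_on with
  | _ i ih =>
  intro j h1 h2 h3 h4
  by_cases hi : i = 1
  · subst hi
    rw [hEd1 j h3 h4]
    have := subEps_le_one ε (τq 1) (τd j)
    push_cast; linarith
  · have hi2 : 1 < i := by omega
    by_cases hj : j = 1
    · subst hj
      rw [hEdi1 i hi2 h2]
      have := subEps_le_one ε (τq i) (τd 1)
      have := min_le_right (Ed (i-1) 1 + 1) (subEps ε (τq i) (τd 1) + ((i : ℝ) - 1))
      linarith
    · have hj2 : 1 < j := by omega
      rw [hEdij i j hi2 h2 hj2 h4]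
      have h5 : Ed (i-1) (j-1) ≤ ((i-1 : ℕ) : ℝ) :=
        ih (i-1) (by omega) (j-1) (by omega) (by omega) (by omega) (by omega)
      have := subEps_le_one ε (τq i) (τd j)
      have := min_le_right (min (Ed (i - 1) j + 1)
          (Ed i (j - 1) + 1 - subEps ε (τq i) (τd (j - 1)) + subEps ε (τq i) (τd j)))
        (Ed (i - 1) (j - 1) + subEps ε (τq i) (τd j))
      have hcast : ((i-1 : ℕ) : ℝ) = (i : ℝ) - 1 := by
        push_cast [Nat.cast_sub (by omega : 1 ≤ i)]; ring
      linarith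

/-- `Ed i j` is at most `G(i,s,j)` for every window start `s`. -/
lemma Ed_le_GF
    (hEd1 : ∀ j, 1 ≤ j → j ≤ n → Ed 1 j = subEps ε (τq 1) (τd j))
    (hEdi1 : ∀ i, 1 < i → i ≤ m →
      Ed i 1 = min (Ed (i - 1) 1 + 1) (subEps ε (τq i) (τd 1) + ((i : ℝ) - 1)))
    (hEdij : ∀ i j, 1 < i → i ≤ m → 1 < j → j ≤ n →
      Ed i j = min (min (Ed (i - 1) j + 1)
          (Ed i (j - 1) + 1 - subEps ε (τq i) (τd (j - 1)) + subEps ε (τq i) (τd j)))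
        (Ed (i - 1) (j - 1) + subEps ε (τq i) (τd j))) :
    ∀ k i j s, i + j ≤ k → 1 ≤ i → i ≤ m → 1 ≤ j → j ≤ n → 1 ≤ s → s ≤ j →
      Ed i j ≤ GF ε τq (fun t => τd (s + t - 1)) i (j - s + 1) := by
  intro k
  induction k with
  | zero => intro i j s hk h1; omega
  | succ k ih =>
  intro i j s hk h1 h2 h3 h4 h5 h6
  obtain ⟨i', rfl⟩ : ∃ i', i = i' + 1 := ⟨i - 1, by omega⟩
  simp only [GF_succ]
  have eL : j - s + 1 - 1 = j - s := by omega
  have eρ : s + (j - s + 1) - 1 = j := by omega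
  rw [eL, eρ]
  by_cases hi : i' = 0
  · -- i = 1
    subst hi
    rw [hEd1 j h3 h4, GF_zero, edrA_zero_left]
    have c0 := subEps_nonneg ε (τq 1) (τd j)
    have c1 := subEps_le_one ε (τq 1) (τd j)
    have hnn : (0:ℝ) ≤ ((j - s : ℕ) : ℝ) := Nat.cast_nonneg _
    have hnn2 : (0:ℝ) ≤ ((j - s + 1 - 1 : ℕ) : ℝ) := Nat.cast_nonneg _
    exact le_min (by linarith) (by linarith)
  · have hi1 : 1 ≤ i' := by omega
    by_cases hj : j = 1
    · -- j = 1, hence s = 1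
      subst hj
      obtain rfl : s = 1 := by omega
      have hrec := hEdi1 (i' + 1) (by omega) h2
      simp only [Nat.add_sub_cancel] at hrec
      norm_num
      rw [edrA_zero_right]
      refine ⟨?_, ?_⟩
      · rw [hrec]
        refine le_trans (min_le_right _ _) ?_
        push_cast
        linarith
      · have hA : Ed (i' + 1) 1 ≤ Ed i' 1 + 1 := by
          rw [hrec]; exact min_le_left _ _
        have hih := ih i' 1 1 (by omega) hi1 (by omega) le_rfl h4 le_rfl le_rfl
        norm_num at hih
        linarith
    · -- i ≥ 2, j ≥ 2
      have hj2 : 1 < j := by omega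
      have hrec := hEdij (i' + 1) j (by omega) h2 hj2 h4
      simp only [Nat.add_sub_cancel] at hrec
      refine le_min ?_ ?_
      · -- first branch : Ed ≤ edrA i' (j-s) + c
        by_cases hs : s = j
        · subst hs
          have e0 : s - s = 0 := by omega
          rw [e0, edrA_zero_right]
          have h3rd : Ed (i' + 1) s ≤ Ed i' (s - 1) + subEps ε (τq (i'+1)) (τd s) := by
            rw [hrec]; exact min_le_right _ _
          have hU := EdU m n τq τd ε Ed hEd1 hEdi1 hEdij i' (s - 1)
            hi1 (by omega) (by omega) (by omega)
          linarith
        · -- s ≤ j - 1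
          obtain ⟨u, hu⟩ : ∃ u, j - s = u + 1 := ⟨j - s - 1, by omega⟩
          obtain ⟨i'', rfl⟩ : ∃ i'', i' = i'' + 1 := ⟨i' - 1, by omega⟩
          rw [hu]
          rw [edrA_decomp ε τq (fun t => τd (s + t - 1)) i'' u]
          rcases min_cases (GF ε τq (fun t => τd (s + t - 1)) (i''+1) (u+1))
              (edrA ε τq (fun t => τd (s + t - 1)) (i''+1) u + 1) with ⟨hmin, _⟩ | ⟨hmin, _⟩
          · rw [hmin]
            have h3rd : Ed (i''+1+1) j ≤ Ed (i''+1) (j-1) + subEps ε (τq (i''+1+1)) (τd j) := by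
              rw [hrec]; exact min_le_right _ _
            have hih := ih (i''+1) (j-1) s (by omega) (by omega) (by omega)
              (by omega) (by omega) h5 (by omega)
            have e2 : j - 1 - s + 1 = u + 1 := by omega
            rw [e2] at hih
            linarith
          · rw [hmin]
            have hmid : Ed (i''+1+1) j ≤ Ed (i''+1+1) (j-1) + 1
                - subEps ε (τq (i''+1+1)) (τd (j-1)) + subEps ε (τq (i''+1+1)) (τd j) := by
              rw [hrec]; exact le_trans (min_le_left _ _) (min_le_right _ _)
            have hih := ih (i''+1+1) (j-1) s (by omega) (by omega) h2
              (by omega) (by omega) h5 (by omega)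
            simp only [GF_succ] at hih
            have e3 : j - 1 - s + 1 = u + 1 := by omega
            rw [e3] at hih
            have e4 : u + 1 - 1 = u := by omega
            rw [e4] at hih
            have e5 : s + (u + 1) - 1 = j - 1 := by omega
            rw [e5] at hih
            have hbr := le_trans hih (min_le_left _ _)
            linarith
      · -- second branch : Ed ≤ GF i' (j-s+1) + 1
        have hA : Ed (i'+1) j ≤ Ed i' j + 1 := by
          rw [hrec]; exact le_trans (min_le_left _ _) (min_le_left _ _)
        have hih := ih i' j s (by omega) hi1 (by omega) h3 h4 h5 h6
        linarith

/-- For every `(i,j)` there is a window start `s` with `G(i,s,j) ≤ Ed i j`. -/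
lemma exists_GF_le_Ed
    (hEd1 : ∀ j, 1 ≤ j → j ≤ n → Ed 1 j = subEps ε (τq 1) (τd j))
    (hEdi1 : ∀ i, 1 < i → i ≤ m →
      Ed i 1 = min (Ed (i - 1) 1 + 1) (subEps ε (τq i) (τd 1) + ((i : ℝ) - 1)))
    (hEdij : ∀ i j, 1 < i → i ≤ m → 1 < j → j ≤ n →
      Ed i j = min (min (Ed (i - 1) j + 1)
          (Ed i (j - 1) + 1 - subEps ε (τq i) (τd (j - 1)) + subEps ε (τq i) (τd j)))
        (Ed (i - 1) (j - 1) + subEps ε (τq i) (τd j))) :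
    ∀ k i j, i + j ≤ k → 1 ≤ i → i ≤ m → 1 ≤ j → j ≤ n →
      ∃ s, 1 ≤ s ∧ s ≤ j ∧ GF ε τq (fun t => τd (s + t - 1)) i (j - s + 1) ≤ Ed i j := by
  intro k
  induction k with
  | zero => intro i j hk h1; omega
  | succ k ih =>
  intro i j hk h1 h2 h3 h4
  obtain ⟨i', rfl⟩ : ∃ i', i = i' + 1 := ⟨i - 1, by omega⟩
  by_cases hi : i' = 0
  · -- i = 1 : take s = j
    subst hi
    refine ⟨j, h3, le_rfl, ?_⟩
    have e : j - j + 1 = 1 := by omega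
    rw [e]
    simp only [GF_succ, GF_zero]
    have e2 : (1:ℕ) - 1 = 0 := rfl
    rw [e2, edrA_zero_left]
    have e3 : j + 1 - 1 = j := by omega
    rw [e3, hEd1 j h3 h4]
    refine le_trans (min_le_left _ _) ?_
    norm_num
  · have hi1 : 1 ≤ i' := by omega
    by_cases hj : j = 1
    · -- j = 1 : take s = 1
      subst hj
      obtain ⟨s, hs1, hs2, hih⟩ := ih i' 1 (by omega) hi1 (by omega) le_rfl h4
      obtain rfl : s = 1 := by omega
      refine ⟨1, le_rfl, le_rfl, ?_⟩
      rw [hEdi1 (i'+1) (by omega) h2]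
      simp only [Nat.add_sub_cancel]
      simp only [GF_succ]
      refine le_min ?_ ?_
      · refine le_trans (min_le_right _ _) ?_
        linarith
      · refine le_trans (min_le_left _ _) ?_
        have e : (1:ℕ) - 1 + 1 - 1 = 0 := rfl
        rw [e, edrA_zero_right]
        have e2 : 1 + (1 - 1 + 1) - 1 = 1 := rfl
        rw [e2]
        push_cast
        linarith
    · -- i ≥ 2, j ≥ 2
      have hj2 : 1 < j := by omega
      have hrec := hEdij (i'+1) j (by omega) h2 hj2 h4
      simp only [Nat.add_sub_cancel] at hrec
      set A := Ed i' j + 1 with hA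
      set B := Ed (i'+1) (j-1) + 1 - subEps ε (τq (i'+1)) (τd (j-1))
        + subEps ε (τq (i'+1)) (τd j) with hB
      set C := Ed i' (j-1) + subEps ε (τq (i'+1)) (τd j) with hC
      rcases min_cases (min A B) C with ⟨hq, _⟩ | ⟨hq, _⟩
      · rw [hq] at hrec
        rcases min_cases A B with ⟨hq2, _⟩ | ⟨hq2, _⟩
        · -- Ed = A = Ed i' j + 1
          rw [hq2] at hrec
          obtain ⟨s, hs1, hs2, hih⟩ := ih i' j (by omega) hi1 (by omega) h3 h4
          refine ⟨s, hs1, hs2, ?_⟩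
          simp only [GF_succ]
          refine le_trans (min_le_right _ _) ?_
          rw [hrec, hA]
          linarith
        · -- Ed = B
          rw [hq2] at hrec
          obtain ⟨s, hs1, hs2, hih⟩ := ih (i'+1) (j-1) (by omega) h1 h2 (by omega) (by omega)
          refine ⟨s, hs1, by omega, ?_⟩
          obtain ⟨u, hu⟩ : ∃ u, j - s = u + 1 := ⟨j - s - 1, by omega⟩
          obtain ⟨i'', rfl⟩ : ∃ i'', i' = i'' + 1 := ⟨i' - 1, by omega⟩
          have e2 : j - 1 - s + 1 = u + 1 := by omega
          rw [e2, GF_succ' ε τq τd (i''+1) (u+1) s] at hih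
          have e3 : u + 1 - 1 = u := by omega
          rw [e3] at hih
          have e4 : s + (u + 1) - 1 = j - 1 := by omega
          rw [e4] at hih
          -- goal : GF (i''+2) (j - s + 1) ≤ Ed (i''+2) j
          simp only [GF_succ]
          have e5 : j - s + 1 - 1 = u + 1 := by omega
          rw [e5]
          have e6 : s + (j - s + 1) - 1 = j := by omega
          rw [e6]
          refine le_trans (min_le_left _ _) ?_
          have hins : edrA ε τq (fun t => τd (s + t - 1)) (i''+1) (u+1)
              ≤ edrA ε τq (fun t => τd (s + t - 1)) (i''+1) u + 1 :=
            edrA_ins ε τq _ _ _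
          have c'0 := subEps_nonneg ε (τq (i''+1+1)) (τd (j-1))
          have c'1 := subEps_le_one ε (τq (i''+1+1)) (τd (j-1))
          rcases min_cases (edrA ε τq (fun t => τd (s + t - 1)) (i''+1) u
              + subEps ε (τq (i''+1+1)) (τd (j-1)))
              (GF ε τq (fun t => τd (s + t - 1)) (i''+1) (u+1) + 1) with ⟨hm, _⟩ | ⟨hm, _⟩
          · rw [hm] at hih
            rw [hrec, hB]
            linarith
          · rw [hm] at hih
            have hle := edrA_le_GF ε τq (fun t => τd (s + t - 1)) i'' u
            rw [hrec, hB]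
            linarith
      · -- Ed = C
        rw [hq] at hrec
        obtain ⟨s, hs1, hs2, hih⟩ := ih i' (j-1) (by omega) hi1 (by omega) (by omega) (by omega)
        refine ⟨s, hs1, by omega, ?_⟩
        obtain ⟨u, hu⟩ : ∃ u, j - s = u + 1 := ⟨j - s - 1, by omega⟩
        obtain ⟨i'', rfl⟩ : ∃ i'', i' = i'' + 1 := ⟨i' - 1, by omega⟩
        have e2 : j - 1 - s + 1 = u + 1 := by omega
        rw [e2] at hih
        simp only [GF_succ]
        have e5 : j - s + 1 - 1 = u + 1 := by omega
        rw [e5]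
        have e6 : s + (j - s + 1) - 1 = j := by omega
        rw [e6]
        refine le_trans (min_le_left _ _) ?_
        have hle : edrA ε τq (fun t => τd (s + t - 1)) (i''+1) (u+1)
            ≤ GF ε τq (fun t => τd (s + t - 1)) (i''+1) (u+1) :=
          edrA_le_GF ε τq (fun t => τd (s + t - 1)) i'' u
        rw [hrec, hC]
        linarith

/-- Descent: every window EDR value dominates some `Ed m j'`. -/
lemma edr_descent (hm : 1 ≤ m)
    (hEd1 : ∀ j, 1 ≤ j → j ≤ n → Ed 1 j = subEps ε (τq 1) (τd j))
    (hEdi1 : ∀ i, 1 < i → i ≤ m →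
      Ed i 1 = min (Ed (i - 1) 1 + 1) (subEps ε (τq i) (τd 1) + ((i : ℝ) - 1)))
    (hEdij : ∀ i j, 1 < i → i ≤ m → 1 < j → j ≤ n →
      Ed i j = min (min (Ed (i - 1) j + 1)
          (Ed i (j - 1) + 1 - subEps ε (τq i) (τd (j - 1)) + subEps ε (τq i) (τd j)))
        (Ed (i - 1) (j - 1) + subEps ε (τq i) (τd j))) :
    ∀ j s, 1 ≤ s → s ≤ j → j ≤ n →
      ∃ j', 1 ≤ j' ∧ j' ≤ n ∧ Ed m j' ≤ edrA ε τq (fun t => τd (s + t - 1)) m (j - s + 1) := by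
  intro j
  induction j using Nat.strong_induction_on with
  | _ j ihj =>
  intro s hs1 hs2 hjn
  obtain ⟨m', rfl⟩ : ∃ m', m = m' + 1 := ⟨m - 1, by omega⟩
  obtain ⟨u, hu⟩ : ∃ u, j - s = u + 1 ∨ j - s = 0 ∧ u = 0 := ⟨j - s - 1, by omega⟩
  rcases hu with hu | ⟨hu, -⟩
  · -- s < j
    rw [hu]
    rw [edrA_decomp ε τq (fun t => τd (s + t - 1)) m' (u+1)]
    rcases min_cases (GF ε τq (fun t => τd (s + t - 1)) (m'+1) (u+1+1))
        (edrA ε τq (fun t => τd (s + t - 1)) (m'+1) (u+1) + 1) with ⟨hmin, _⟩ | ⟨hmin, _⟩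
    · refine ⟨j, by omega, hjn, ?_⟩
      rw [hmin]
      have := Ed_le_GF (m'+1) n τq τd ε Ed hEd1 hEdi1 hEdij (m'+1+j) (m'+1) j s
        le_rfl (by omega) le_rfl (by omega) hjn hs1 hs2
      rw [hu] at this
      exact this
    · rw [hmin]
      obtain ⟨j', hj1, hj2, hle⟩ := ihj (j-1) (by omega) s hs1 (by omega) (by omega)
      have e : j - 1 - s + 1 = u + 1 := by omega
      rw [e] at hle
      exact ⟨j', hj1, hj2, by linarith⟩
  · -- s = j
    rw [hu]
    have e : (0:ℕ) + 1 = 1 := rfl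
    rw [e]
    rw [edrA_decomp ε τq (fun t => τd (s + t - 1)) m' 0]
    have hU := EdU (m'+1) n τq τd ε Ed hEd1 hEdi1 hEdij (m'+1) j hm (le_refl _) (by omega) hjn
    push_cast at hU
    refine ⟨j, by omega, hjn, ?_⟩
    rcases min_cases (GF ε τq (fun t => τd (s + t - 1)) (m'+1) (0+1))
        (edrA ε τq (fun t => τd (s + t - 1)) (m'+1) 0 + 1) with ⟨hmin, _⟩ | ⟨hmin, _⟩
    · rw [hmin]
      have := Ed_le_GF (m'+1) n τq τd ε Ed hEd1 hEdi1 hEdij (m'+1+j) (m'+1) j s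
        le_rfl (by omega) le_rfl (by omega) hjn hs1 hs2
      have e3 : j - s + 1 = 0 + 1 := by omega
      rw [e3] at this
      exact this
    · rw [hmin, edrA_zero_right]
      push_cast
      linarith

end Main


/-- If `Ed` satisfies `Ed(1,j) = sub_ε(τq[1],τd[j])`,
`Ed(i,1) = min{ Ed(i−1,1) + 1, sub_ε(τq[i],τd[1]) + (i−1) }` for `i > 1`, and
`Ed(i,j) = min{ Ed(i−1,j) + 1, Ed(i,j−1) + 1 − sub_ε(τq[i],τd[j−1]) + sub_ε(τq[i],τd[j]),
Ed(i−1,j−1) + sub_ε(τq[i],τd[j]) }` for `i, j > 1`, then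
`min_{1 ≤ j ≤ n} Ed(m,j) = min_{1 ≤ i ≤ j ≤ n} edr(τq, τd[i:j])`. -/
theorem edr_array_min_eq_min_subtrajectory_edr {P : Type*} [MetricSpace P]
    (m n : ℕ) (hm : 1 ≤ m) (hn : 1 ≤ n)
    (τq τd : ℕ → P) (ε : ℝ) (hε : 0 ≤ ε) (Ed : ℕ → ℕ → ℝ)
    (hEd1 : ∀ j, 1 ≤ j → j ≤ n → Ed 1 j = subEps ε (τq 1) (τd j))
    (hEdi1 : ∀ i, 1 < i → i ≤ m →
      Ed i 1 = min (Ed (i - 1) 1 + 1) (subEps ε (τq i) (τd 1) + ((i : ℝ) - 1)))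
    (hEdij : ∀ i j, 1 < i → i ≤ m → 1 < j → j ≤ n →
      Ed i j = min (min (Ed (i - 1) j + 1)
          (Ed i (j - 1) + 1 - subEps ε (τq i) (τd (j - 1)) + subEps ε (τq i) (τd j)))
        (Ed (i - 1) (j - 1) + subEps ε (τq i) (τd j))) :
    sInf {v : ℝ | ∃ j : ℕ, 1 ≤ j ∧ j ≤ n ∧ v = Ed m j} =
      sInf {v : ℝ | ∃ i j : ℕ, 1 ≤ i ∧ i ≤ j ∧ j ≤ n ∧
        v = edrA ε τq (fun t => τd (i + t - 1)) m (j - i + 1)} := by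
  set SA := {v : ℝ | ∃ j : ℕ, 1 ≤ j ∧ j ≤ n ∧ v = Ed m j} with hSA
  set SB := {v : ℝ | ∃ i j : ℕ, 1 ≤ i ∧ i ≤ j ∧ j ≤ n ∧
      v = edrA ε τq (fun t => τd (i + t - 1)) m (j - i + 1)} with hSB
  obtain ⟨m', hm'⟩ : ∃ m', m = m' + 1 := ⟨m - 1, by omega⟩
  -- Ed values admit a GF lower bound, hence are ≥ some window edr value, hence ≥ 0
  have key : ∀ j, 1 ≤ j → j ≤ n → ∃ s, 1 ≤ s ∧ s ≤ j ∧
      edrA ε τq (fun t => τd (s + t - 1)) m (j - s + 1) ≤ Ed m j := by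
    intro j h1 h2
    obtain ⟨s, hs1, hs2, hle⟩ := exists_GF_le_Ed m n τq τd ε Ed hEd1 hEdi1 hEdij
      (m + j) m j le_rfl hm le_rfl h1 h2
    refine ⟨s, hs1, hs2, le_trans ?_ hle⟩
    subst hm'
    exact edrA_le_GF ε τq (fun t => τd (s + t - 1)) m' (j - s)
  have hAne : SA.Nonempty := ⟨Ed m n, n, hn, le_rfl, rfl⟩
  have hBne : SB.Nonempty := ⟨edrA ε τq (fun t => τd (n + t - 1)) m (n - n + 1),
    n, n, hn, le_rfl, le_rfl, rfl⟩
  have hBbdd : BddBelow SB := by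
    refine ⟨0, fun v hv => ?_⟩
    obtain ⟨i, j, -, -, -, rfl⟩ := hv
    exact edrA_nonneg ε τq _ m _
  have hAbdd : BddBelow SA := by
    refine ⟨0, fun v hv => ?_⟩
    obtain ⟨j, h1, h2, rfl⟩ := hv
    obtain ⟨s, -, -, hle⟩ := key j h1 h2
    exact le_trans (edrA_nonneg ε τq _ m _) hle
  apply le_antisymm
  · refine le_csInf hBne ?_
    rintro b ⟨i, j, hi1, hij, hjn, rfl⟩
    obtain ⟨j', h1, h2, hle⟩ := edr_descent m n τq τd ε Ed hm hEd1 hEdi1 hEdij j i hi1 hij hjn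
    exact le_trans (csInf_le hAbdd ⟨j', h1, h2, rfl⟩) hle
  · refine le_csInf hAne ?_
    rintro a ⟨j, h1, h2, rfl⟩
    obtain ⟨s, hs1, hs2, hle⟩ := key j h1 h2
    exact le_trans (csInf_le hBbdd ⟨s, j, hs1, hs2, h2, rfl⟩) hle
end
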